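/- arXiv:2409.04629 — 4 statements merged into one kernel-verified Lean document; each statement's English description precedes it below -/
import Mathlib

section
/- Let p : X̃ → X be a harmonic G-cover with finite abelian Galois group G. Then there exists a free G-cover p_f : X̃_f → X_f and a subset F_f ⊆ E(X_f) such that p is the edge contraction of p_f along F_f; that is, X is obtained from X_f by contracting the edges in F_f, X̃ is obtained from X̃_f by contracting the edges in p_f⁻¹(F_f), and p is the induced harmonic G-cover. -/
set_option autoImplicit false
set_option maxHeartbeats 1000000

/-- A graph in the sense of Serre: a finite set of vertices, a finite set of
half-edges with a fixed-point-free involution, and a root map. -/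
structure SerreGraph where
  V : Type
  H : Type
  fintypeV : Fintype V
  fintypeH : Fintype H
  decEqV : DecidableEq V
  decEqH : DecidableEq H
  inv : H → H
  inv_inv : ∀ h, inv (inv h) = h
  inv_ne : ∀ h, inv h ≠ h
  root : H → V

attribute [instance] SerreGraph.fintypeV SerreGraph.fintypeH SerreGraph.decEqV SerreGraph.decEqH

namespace SerreGraph

/-- Edges are orbits `{h, inv h}` of the involution. -/
def Edge (X : SerreGraph) : Type := Quot (fun h h' : X.H => h' = X.inv h)

/-- The edge underlying a half-edge. -/
def edgeOf (X : SerreGraph) (h : X.H) : X.Edge := Quot.mk _ h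

lemma edgeOf_surjective (X : SerreGraph) : Function.Surjective X.edgeOf :=
  fun e => Quot.exists_rep e

lemma edgeOf_inv (X : SerreGraph) (h : X.H) : X.edgeOf (X.inv h) = X.edgeOf h :=
  Quot.sound (X.inv_inv h).symm

instance (X : SerreGraph) : Finite X.Edge := Quot.finite _
noncomputable instance (X : SerreGraph) : Fintype X.Edge := Fintype.ofFinite _
noncomputable instance (X : SerreGraph) : DecidableEq X.Edge := Classical.decEq _

/-- One step of adjacency in the graph obtained by deleting the edges in `F`. -/
def adjStep (X : SerreGraph) (F : Finset X.Edge) (u v : X.V) : Prop :=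
  ∃ h : X.H, X.root h = u ∧ X.root (X.inv h) = v ∧ X.edgeOf h ∉ F

/-- `u` and `v` lie in the same connected component of `X ∖ F`. -/
def compRel (X : SerreGraph) (F : Finset X.Edge) (u v : X.V) : Prop :=
  Relation.ReflTransGen (X.adjStep F) u v

/-- A graph is connected if it is nonempty and any two vertices are joined by a path. -/
def Connected (X : SerreGraph) : Prop :=
  Nonempty X.V ∧ ∀ u v : X.V, X.compRel ∅ u v

/-- The vertex set of the connected component of `v` in `X ∖ F`. -/
noncomputable def compVerts (X : SerreGraph) (F : Finset X.Edge) (v : X.V) : Finset X.V :=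
  (Set.toFinite {u | X.compRel F v u}).toFinset

/-- The set of connected components (as vertex sets) of `X ∖ F`. -/
noncomputable def components (X : SerreGraph) (F : Finset X.Edge) : Finset (Finset X.V) :=
  Finset.univ.image (X.compVerts F)

/-- The edges of `X ∖ F` belonging to a component with vertex set `C`. -/
noncomputable def edgesIn (X : SerreGraph) (F : Finset X.Edge) (C : Finset X.V) :
    Finset X.Edge :=
  (Set.toFinite {e | e ∉ F ∧ ∃ h, X.edgeOf h = e ∧ X.root h ∈ C}).toFinset

/-- A spanning tree: a spanning-connected set of edges of cardinality `|V| - 1`. -/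
def IsSpanningTree (X : SerreGraph) (T : Finset X.Edge) : Prop :=
  (∀ u v : X.V, Relation.ReflTransGen
      (fun a b => ∃ h, X.root h = a ∧ X.root (X.inv h) = b ∧ X.edgeOf h ∈ T) u v) ∧
  T.card + 1 = Fintype.card X.V

noncomputable def spanningTrees (X : SerreGraph) : Finset (Finset X.Edge) :=
  (Set.toFinite {T | X.IsSpanningTree T}).toFinset

/-- The number of spanning trees of `X`; by Kirchhoff's theorem this is `|Jac(X)|`. -/
noncomputable def numSpanningTrees (X : SerreGraph) : ℕ := X.spanningTrees.card

/-- The genus `g(X) = |E(X)| - |V(X)| + 1` of a (connected) graph. -/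
noncomputable def genus (X : SerreGraph) : ℕ :=
  Fintype.card X.Edge + 1 - Fintype.card X.V

/-- The Jacobian polynomial `J_X = ∑_T ∏_{e ∉ T} x_e`, summed over spanning trees. -/
noncomputable def jacobianPoly (X : SerreGraph) (R : Type) [CommRing R] :
    MvPolynomial X.Edge R :=
  ∑ T ∈ X.spanningTrees, ∏ e ∈ Tᶜ, MvPolynomial.X e

/-- A closed path: a nonempty list of half-edges, consecutively matched head-to-tail,
including from the last one back to the first. -/
def IsClosedPath (X : SerreGraph) (l : List X.H) : Prop :=
  l ≠ [] ∧ List.Chain' (fun a b => X.root (X.inv a) = X.root b) (l ++ l.take 1)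

/-- A cycle with pairwise distinct edges, all belonging to `S`. -/
def IsEdgeCycle (X : SerreGraph) (S : Finset X.Edge) (l : List X.H) : Prop :=
  X.IsClosedPath l ∧ (∀ h ∈ l, X.edgeOf h ∈ S) ∧ (l.map X.edgeOf).Nodup

/-- An edge is a loop if its two root vertices coincide. -/
def IsLoop (X : SerreGraph) (e : X.Edge) : Prop :=
  ∃ h, X.edgeOf h = e ∧ X.root h = X.root (X.inv h)

/-- An orientation: a choice of half-edge (source half) for every edge. -/
structure Orientation (X : SerreGraph) where
  pick : X.Edge → X.H
  pick_spec : ∀ e, X.edgeOf (pick e) = e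

/-- The voltage of a half-edge: `η(e)` if it is traversed in the chosen orientation,
`η(e)⁻¹` otherwise. -/
def halfVoltage {G : Type} [Group G] (X : SerreGraph) (o : X.Orientation)
    (η : X.Edge → G) (h : X.H) : G :=
  if h = o.pick (X.edgeOf h) then η (X.edgeOf h) else (η (X.edgeOf h))⁻¹

/-- The (Frobenius) voltage of a path of half-edges. -/
def pathVoltage {G : Type} [Group G] (X : SerreGraph) (o : X.Orientation)
    (η : X.Edge → G) (l : List X.H) : G :=
  (l.map (X.halfVoltage o η)).prod

/-- A morphism of Serre graphs. -/
structure Hom (X Y : SerreGraph) where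
  vMap : X.V → Y.V
  hMap : X.H → Y.H
  hMap_inv : ∀ h, hMap (X.inv h) = Y.inv (hMap h)
  root_hMap : ∀ h, Y.root (hMap h) = vMap (X.root h)

/-- The induced map on edges. -/
def Hom.edgeMap {X Y : SerreGraph} (f : Hom X Y) : X.Edge → Y.Edge :=
  Quot.map f.hMap (fun a b hab => by rw [hab, f.hMap_inv])

/-- A morphism is harmonic with local degree function `d` if for every vertex `v`
upstairs and every half-edge `h` rooted at its image, `d v` is the number of
half-edges at `v` mapping to `h`. -/
structure IsHarmonic {X Y : SerreGraph} (f : Hom X Y) (d : X.V → ℕ) : Prop where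
  pos : ∀ v, 0 < d v
  balanced : ∀ (v : X.V) (h : Y.H), Y.root h = f.vMap v →
    d v = Nat.card {h' : X.H // X.root h' = v ∧ f.hMap h' = h}

/-- A harmonic Galois cover with Galois group `G`: a harmonic morphism of degree `|G|`
together with an equivariant `G`-action that is transitive on vertex fibers and simply
transitive on edge fibers. -/
structure GCover (G : Type) [Group G] [Fintype G] (Xt X : SerreGraph)
    extends Hom Xt X where
  d : Xt.V → ℕ
  harm : IsHarmonic toHom d
  deg_eq : ∀ v : X.V,
    ∑ w ∈ Finset.univ.filter (fun w => toHom.vMap w = v), d w = Fintype.card G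
  smulV : G → Xt.V → Xt.V
  smulH : G → Xt.H → Xt.H
  one_smulV : ∀ w, smulV 1 w = w
  mul_smulV : ∀ g g' w, smulV (g * g') w = smulV g (smulV g' w)
  one_smulH : ∀ h, smulH 1 h = h
  mul_smulH : ∀ g g' h, smulH (g * g') h = smulH g (smulH g' h)
  smulH_inv : ∀ g h, smulH g (Xt.inv h) = Xt.inv (smulH g h)
  root_smulH : ∀ g h, Xt.root (smulH g h) = smulV g (Xt.root h)
  vMap_smulV : ∀ g w, toHom.vMap (smulV g w) = toHom.vMap w
  hMap_smulH : ∀ g h, toHom.hMap (smulH g h) = toHom.hMap h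
  d_smulV : ∀ g w, d (smulV g w) = d w
  vertex_trans : ∀ w w' : Xt.V, toHom.vMap w = toHom.vMap w' → ∃ g, smulV g w = w'
  edge_trans : ∀ ht ht' : Xt.H,
    (toHom.hMap ht' = toHom.hMap ht ∨ toHom.hMap ht' = X.inv (toHom.hMap ht)) →
    ∃ g, smulH g ht = ht' ∨ smulH g ht = Xt.inv ht'
  edge_free : ∀ (g : G) (ht : Xt.H),
    (smulH g ht = ht ∨ smulH g ht = Xt.inv ht) → g = 1

namespace GCover

variable {G : Type} [Group G] [Fintype G] {Xt X : SerreGraph}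

/-- The cover is free if all local degrees are one. -/
def IsFree (c : GCover G Xt X) : Prop := ∀ w, c.d w = 1

/-- The dilation subgroup of a vertex: the common stabilizer of the vertices in its fiber. -/
def dilation (c : GCover G Xt X) (v : X.V) : Set G :=
  {g | ∀ w : Xt.V, c.vMap w = v → c.smulV g w = w}

/-- One step of adjacency upstairs, through half-edges lying over `X ∖ F`. -/
def liftStep (c : GCover G Xt X) (F : Finset X.Edge) (a b : Xt.V) : Prop :=
  ∃ ht : Xt.H, Xt.root ht = a ∧ Xt.root (Xt.inv ht) = b ∧ X.edgeOf (c.hMap ht) ∉ F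

/-- The number of connected components of the preimage of the component of `v` in `X ∖ F`. -/
noncomputable def numLiftComponents (c : GCover G Xt X) (F : Finset X.Edge) (v : X.V) : ℕ :=
  Nat.card (Quot (fun a b : {w : Xt.V // X.compRel F v (c.vMap w)} => c.liftStep F a.1 b.1))

/-- The connected component of `v` in `X ∖ F` is `G`-nontrivial, i.e. the restriction of the
cover over it is not isomorphic to the trivial `G`-cover (equivalently, its preimage does
not have exactly `|G|` connected components). -/
def GNontrivialAt (c : GCover G Xt X) (F : Finset X.Edge) (v : X.V) : Prop :=
  c.numLiftComponents F v ≠ Fintype.card G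

/-- Independent sets of the matroid `M*(X̃/X)`. -/
def Indep (c : GCover G Xt X) (F : Finset X.Edge) : Prop :=
  ∀ v : X.V, c.GNontrivialAt F v

/-- Bases of the matroid `M*(X̃/X)`: maximal independent sets. -/
def IsBasisD (c : GCover G Xt X) (F : Finset X.Edge) : Prop :=
  c.Indep F ∧ ∀ F' : Finset X.Edge, F ⊆ F' → c.Indep F' → F' = F

/-- The dilated `G`-voltage assignment `η` (together with a section `σ` of the vertex map)
represents the cover: for each edge `e`, some lift of `e` runs from `σ(s(e))` to
`η(e) • σ(t(e))`. -/
structure IsVoltageRep (c : GCover G Xt X) (o : X.Orientation) (σ : X.V → Xt.V)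
    (η : X.Edge → G) : Prop where
  sec : ∀ v, c.vMap (σ v) = v
  lift : ∀ e : X.Edge, ∃ ht : Xt.H, c.hMap ht = o.pick e ∧
    Xt.root ht = σ (X.root (o.pick e)) ∧
    Xt.root (Xt.inv ht) = c.smulV (η e) (σ (X.root (X.inv (o.pick e))))

/-- The component of `v` in `X ∖ F` is nontrivial for the cover twisted by the character
`ρ`: it contains a vertex whose dilation group has nontrivial image under `ρ`, or a closed
path whose voltage has nontrivial image under `ρ`. -/
def RhoNontrivialAt (c : GCover G Xt X) (o : X.Orientation) (η : X.Edge → G)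
    (ρ : G →* ℂ) (F : Finset X.Edge) (v : X.V) : Prop :=
  (∃ u : X.V, X.compRel F v u ∧ ∃ g ∈ c.dilation u, ρ g ≠ 1) ∨
  (∃ l : List X.H, X.IsClosedPath l ∧
    (∀ h ∈ l, X.edgeOf h ∉ F ∧ X.compRel F v (X.root h)) ∧
    ρ (X.pathVoltage o η l) ≠ 1)

/-- Bases of the `ρ`-twisted matroid `M*(X̃/X, ρ)`: maximal subsets `F` such that every
connected component of `X ∖ F` is `ρ`-nontrivial. -/
def IsBasisRho (c : GCover G Xt X) (o : X.Orientation) (η : X.Edge → G)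
    (ρ : G →* ℂ) (F : Finset X.Edge) : Prop :=
  (∀ v : X.V, c.RhoNontrivialAt o η ρ F v) ∧
  ∀ F' : Finset X.Edge, F ⊆ F' → (∀ v : X.V, c.RhoNontrivialAt o η ρ F' v) → F' = F

end GCover

/-- The weight of a connected component with edge set `S`: `|1 - ρ(η(C))|²` where `η(C)` is
the voltage of its unique cycle, if it has one, and `1` otherwise (tree components). -/
noncomputable def cycleWeight {G : Type} [Group G] (X : SerreGraph) (o : X.Orientation)
    (η : X.Edge → G) (ρ : G →* ℂ) (S : Finset X.Edge) : ℝ := by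
  classical exact
  if hc : ∃ l, X.IsEdgeCycle S l then
    ‖(1 : ℂ) - ρ (X.pathVoltage o η hc.choose)‖ ^ 2
  else 1

/-- The weight `w_ρ(F)`: the product of the weights of the connected components of `X ∖ F`. -/
noncomputable def basisWeight {G : Type} [Group G] (X : SerreGraph) (o : X.Orientation)
    (η : X.Edge → G) (ρ : G →* ℂ) (F : Finset X.Edge) : ℝ :=
  ∏ C ∈ X.components F, cycleWeight X o η ρ (X.edgesIn F C)

/-- The weight `w(M*(X̃/X, ρ))` of the `ρ`-twisted matroid: the sum of the weights of its
bases. -/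
noncomputable def GCover.twistedWeight {G : Type} [Group G] [Fintype G] {Xt X : SerreGraph}
    (c : GCover G Xt X) (o : X.Orientation) (η : X.Edge → G) (ρ : G →* ℂ) : ℝ :=
  ∑ F ∈ (Set.toFinite {F : Finset X.Edge | c.IsBasisRho o η ρ F}).toFinset,
    basisWeight X o η ρ F

/-- The weight polynomial `P_{X̃/X,ρ} = ∑_F w_ρ(F) ∏_{e ∈ F} x_e` of the `ρ`-twisted
matroid, summed over its bases. -/
noncomputable def GCover.twistedWeightPoly {G : Type} [Group G] [Fintype G]
    {Xt X : SerreGraph} (c : GCover G Xt X) (o : X.Orientation) (η : X.Edge → G)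
    (ρ : G →* ℂ) : MvPolynomial X.Edge ℝ :=
  ∑ F ∈ (Set.toFinite {F : Finset X.Edge | c.IsBasisRho o η ρ F}).toFinset,
    MvPolynomial.C (basisWeight X o η ρ F) * ∏ e ∈ F, MvPolynomial.X e

end SerreGraph
namespace SerreGraph

/-- One contraction step: `a` and `b` are joined by an edge belonging to `F`. -/
def contractStep (X : SerreGraph) (F : Finset X.Edge) (a b : X.V) : Prop :=
  ∃ h, X.edgeOf h ∈ F ∧ X.root h = a ∧ X.root (X.inv h) = b

/-- Data exhibiting `Xc` as the contraction of `X` along the edge set `F`: the vertices of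
`Xc` are the connected components of the subgraph spanned by `F`, and the half-edges of `Xc`
are the half-edges of `X` not lying on `F`. -/
structure ContractionData (X Xc : SerreGraph) (F : Finset X.Edge) where
  vMap : X.V → Xc.V
  hMap : (h : X.H) → X.edgeOf h ∉ F → Xc.H
  hMap_injective : ∀ h₁ hh₁ h₂ hh₂, hMap h₁ hh₁ = hMap h₂ hh₂ → h₁ = h₂
  hMap_surjective : ∀ k : Xc.H, ∃ h hh, hMap h hh = k
  hMap_inv : ∀ h hh hh', hMap (X.inv h) hh' = Xc.inv (hMap h hh)
  root_hMap : ∀ h hh, Xc.root (hMap h hh) = vMap (X.root h)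
  vMap_surjective : Function.Surjective vMap
  vMap_eq_iff : ∀ u v, vMap u = vMap v ↔ Relation.ReflTransGen (X.contractStep F) u v

/-- The valency of a vertex (loops counted twice). -/
noncomputable def valency (X : SerreGraph) (v : X.V) : ℕ :=
  Nat.card {h : X.H // X.root h = v}

/-- The Laplacian matrix `L = Q - A` of a graph. -/
noncomputable def lapl (X : SerreGraph) : Matrix X.V X.V ℤ :=
  Matrix.of fun u v =>
    (if u = v then (X.valency u : ℤ) else 0) -
      (Nat.card {h : X.H // X.root h = u ∧ X.root (X.inv h) = v} : ℤ)

/-- The Laplacian as a homomorphism on divisors. -/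
noncomputable def laplHom (X : SerreGraph) : (X.V → ℤ) →+ (X.V → ℤ) where
  toFun := fun D u => ∑ v, X.lapl u v * D v
  map_zero' := by funext u; simp
  map_add' := by
    intro a b; funext u
    simp [mul_add, Finset.sum_add_distrib]

/-- Divisors of total degree zero. -/
noncomputable def div0 (X : SerreGraph) : AddSubgroup (X.V → ℤ) where
  carrier := {D | ∑ v, D v = 0}
  add_mem' := by
    intro a b ha hb
    simp only [Set.mem_setOf_eq, Pi.add_apply] at *
    simp [Finset.sum_add_distrib, ha, hb]
  zero_mem' := by simp
  neg_mem' := by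
    intro a ha
    simp only [Set.mem_setOf_eq, Pi.neg_apply] at *
    simp [ha]

/-- The subgroup of principal divisors: the image of the Laplacian. -/
noncomputable def principal (X : SerreGraph) : AddSubgroup (X.V → ℤ) :=
  (laplHom X).range

/-- The Jacobian (critical) group `Jac(X) = Div₀(X) / Im L`. -/
noncomputable def jac (X : SerreGraph) : Type :=
  X.div0 ⧸ ((X.principal).addSubgroupOf X.div0)

noncomputable instance (X : SerreGraph) : AddCommGroup X.jac :=
  inferInstanceAs (AddCommGroup (X.div0 ⧸ ((X.principal).addSubgroupOf X.div0)))

/-- The pushforward of divisors along a graph morphism. -/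
noncomputable def pushforward {Xt X : SerreGraph} (f : Hom Xt X) (D : Xt.V → ℤ) :
    X.V → ℤ :=
  fun v => ∑ w ∈ Finset.univ.filter (fun w => f.vMap w = v), D w

/-- The diagonal valency matrix `Q` (over `ℂ`). -/
noncomputable def qMatrix (X : SerreGraph) : Matrix X.V X.V ℂ :=
  Matrix.of fun u v => if u = v then (X.valency u : ℂ) else 0

/-- The `ρ`-twisted adjacency matrix `A_ρ`. -/
noncomputable def twistedAdj {G : Type} [Group G] (X : SerreGraph) (o : X.Orientation)
    (η : X.Edge → G) (ρ : G →* ℂ) : Matrix X.V X.V ℂ :=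
  Matrix.of fun u v =>
    (∑ e ∈ Finset.univ.filter
        (fun e => X.root (o.pick e) = u ∧ X.root (X.inv (o.pick e)) = v), ρ (η e)) +
    (∑ e ∈ Finset.univ.filter
        (fun e => X.root (o.pick e) = v ∧ X.root (X.inv (o.pick e)) = u),
          (starRingEnd ℂ) (ρ (η e)))

/-- The `ρ`-twisted Laplacian `L_ρ = Q - A_ρ`. -/
noncomputable def twistedLapl {G : Type} [Group G] (X : SerreGraph) (o : X.Orientation)
    (η : X.Edge → G) (ρ : G →* ℂ) : Matrix X.V X.V ℂ :=
  X.qMatrix - X.twistedAdj o η ρ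

/-- The reciprocal `ζ_M(s, x_e, X)⁻¹ = det(I - W)` of the metric zeta function, where `W`
is the edge matrix with entries `s^{x_e}` (two-term determinant formula). -/
noncomputable def zetaMInv (X : SerreGraph) (x : X.Edge → ℝ) (s : ℝ) : ℝ :=
  Matrix.det ((1 : Matrix X.H X.H ℝ) - Matrix.of fun a b : X.H =>
    if X.root (X.inv a) = X.root b ∧ b ≠ X.inv a then s ^ (x (X.edgeOf a)) else 0)

/-- The reciprocal of the Ihara zeta function: the metric zeta with all lengths one. -/
noncomputable def zetaInv (X : SerreGraph) (s : ℝ) : ℝ :=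
  X.zetaMInv (fun _ => 1) s

/-- The reciprocal `L_M(s, x_e, X̃/X, ρ)⁻¹ = det(I - W_ρ)` of the metric Artin `L`-function
of the cover defined by the voltage assignment `η` (two-term determinant formula). -/
noncomputable def LMInv {G : Type} [Group G] (X : SerreGraph) (o : X.Orientation)
    (η : X.Edge → G) (ρ : G →* ℂ) (x : X.Edge → ℝ) (s : ℝ) : ℂ :=
  Matrix.det ((1 : Matrix X.H X.H ℂ) - Matrix.of fun a b : X.H =>
    if X.root (X.inv a) = X.root b ∧ b ≠ X.inv a then
      ρ (X.halfVoltage o η a) * ((s ^ (x (X.edgeOf a)) : ℝ) : ℂ)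
    else 0)

/-- The weight polynomial of a free cover defined by the voltage assignment `η`, twisted by
`ρ`: the sum over all `(g-1)`-element edge sets `F` all of whose complementary components
have genus one of `∏ᵢ |1 - ρ(η(Xᵢ))|² ∏_{e ∈ F} x_e`. -/
noncomputable def freeWeightPoly {G : Type} [Group G] (X : SerreGraph)
    (o : X.Orientation) (η : X.Edge → G) (ρ : G →* ℂ) : MvPolynomial X.Edge ℝ :=
  ∑ F ∈ (Set.toFinite {F : Finset X.Edge |
      F.card + Fintype.card X.V = Fintype.card X.Edge ∧
      ∀ C ∈ X.components F, (X.edgesIn F C).card = C.card}).toFinset,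
    MvPolynomial.C (basisWeight X o η ρ F) * ∏ e ∈ F, MvPolynomial.X e

/-- The `j`-th vertex on the chain subdividing the edge `e` into `n e` parts. -/
noncomputable def subVertex (X : SerreGraph) (o : X.Orientation) (n : X.Edge → ℕ)
    (e : X.Edge) (j : ℕ) : X.V ⊕ ((e : X.Edge) × Fin (n e - 1)) :=
  if _h0 : j = 0 then Sum.inl (X.root (o.pick e))
  else if h : j < n e then Sum.inr ⟨e, ⟨j - 1, by omega⟩⟩
  else Sum.inl (X.root (X.inv (o.pick e)))

/-- The graph obtained from `X` by replacing each edge `e` by a chain of `n e` edges. -/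
noncomputable def subdivide (X : SerreGraph) (o : X.Orientation) (n : X.Edge → ℕ) :
    SerreGraph where
  V := X.V ⊕ ((e : X.Edge) × Fin (n e - 1))
  H := (e : X.Edge) × (Fin (n e) × Bool)
  fintypeV := inferInstance
  fintypeH := inferInstance
  decEqV := Classical.decEq _
  decEqH := Classical.decEq _
  inv := fun p => ⟨p.1, (p.2.1, !p.2.2)⟩
  inv_inv := by rintro ⟨e, i, b⟩; simp
  inv_ne := by rintro ⟨e, i, b⟩ hcon; simp at hcon
  root := fun p => X.subVertex o n p.1 (if p.2.2 then (p.2.1 : ℕ) + 1 else (p.2.1 : ℕ))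

end SerreGraph

/-- The cycle graph with `k` vertices, every pair of cyclically adjacent vertices joined by
`M` parallel edges. -/
def cycleGraph (k M : ℕ) : SerreGraph where
  V := Fin k
  H := Fin k × Fin M × Bool
  fintypeV := inferInstance
  fintypeH := inferInstance
  decEqV := inferInstance
  decEqH := inferInstance
  inv := fun p => (p.1, p.2.1, !p.2.2)
  inv_inv := by rintro ⟨i, j, b⟩; simp
  inv_ne := by rintro ⟨i, j, b⟩ hcon; simp at hcon
  root := fun p => if p.2.2 then finRotate k p.1 else p.1

section AuxFreeRes

theorem natCardSigma {ι : Type} [Fintype ι] (α : ι → Type) [∀ i, Finite (α i)] :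
    Nat.card (Σ i, α i) = ∑ i : ι, Nat.card (α i) := by
  letI : ∀ i, Fintype (α i) := fun i => Fintype.ofFinite _
  simp only [Nat.card_eq_fintype_card, Fintype.card_sigma]

namespace SerreGraph

theorem edgeOf_eq_iff (Y : SerreGraph) (a b : Y.H) :
    Y.edgeOf a = Y.edgeOf b ↔ b = a ∨ b = Y.inv a := by
  constructor
  · intro h
    have h' := Quot.eq.mp h
    clear h
    induction h' with
    | rel x y hxy => exact Or.inr hxy
    | refl x => exact Or.inl rfl
    | symm x y _ ih =>
      rcases ih with rfl | rfl
      · exact Or.inl rfl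
      · exact Or.inr (Y.inv_inv x).symm
    | trans x y z _ _ ih1 ih2 =>
      rcases ih1 with rfl | rfl
      · exact ih2
      · rcases ih2 with rfl | rfl
        · exact Or.inr rfl
        · exact Or.inl (Y.inv_inv x)
  · rintro (rfl | rfl)
    · rfl
    · exact (Y.edgeOf_inv a).symm

namespace GCover

variable {G : Type} [CommGroup G] [Fintype G] {Xt X : SerreGraph} (c : GCover G Xt X)

theorem exists_vfiber (v : X.V) : ∃ w : Xt.V, c.vMap w = v := by
  by_contra hc
  push_neg at hc
  have h0 : (Finset.univ.filter (fun w => c.vMap w = v)) = ∅ :=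
    Finset.filter_false_of_mem (fun x _ => hc x)
  have hd := c.deg_eq v
  rw [h0, Finset.sum_empty] at hd
  exact Fintype.card_ne_zero hd.symm

noncomputable def wv (v : X.V) : Xt.V := (c.exists_vfiber v).choose

theorem wv_spec (v : X.V) : c.vMap (c.wv v) = v := (c.exists_vfiber v).choose_spec

theorem exists_hfiber (h : X.H) : ∃ ht : Xt.H, c.hMap ht = h := by
  have hb := c.harm.balanced (c.wv (X.root h)) h (c.wv_spec _).symm
  have hd := c.harm.pos (c.wv (X.root h))
  rw [hb] at hd
  obtain ⟨⟨ht, _, h2⟩⟩ := (Nat.card_pos_iff.mp hd).1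
  exact ⟨ht, h2⟩

noncomputable def bh (h : X.H) : Xt.H := (c.exists_hfiber h).choose

theorem bh_spec (h : X.H) : c.hMap (c.bh h) = h := (c.exists_hfiber h).choose_spec

theorem smulH_cancel {g g' : G} {ht : Xt.H} (h : c.smulH g ht = c.smulH g' ht) : g = g' := by
  have h1 : c.smulH (g'⁻¹ * g) ht = ht := by
    rw [c.mul_smulH, h, ← c.mul_smulH, inv_mul_cancel, c.one_smulH]
  have h2 := c.edge_free _ _ (Or.inl h1)
  exact (inv_mul_eq_one.mp h2).symm

theorem card_hfiber (h : X.H) :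
    Nat.card {ht : Xt.H // c.hMap ht = h} = Fintype.card G := by
  letI : Fintype {w : Xt.V // c.vMap w = X.root h} := Fintype.ofFinite _
  let f : {ht : Xt.H // c.hMap ht = h} → {w : Xt.V // c.vMap w = X.root h} :=
    fun ht => ⟨Xt.root ht.1, by rw [← c.root_hMap, ht.2]⟩
  have e1 : Nat.card {ht : Xt.H // c.hMap ht = h}
      = Nat.card (Σ w : {w : Xt.V // c.vMap w = X.root h},
          {x : {ht : Xt.H // c.hMap ht = h} // f x = w}) :=
    Nat.card_congr (Equiv.sigmaFiberEquiv f).symm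
  have e2 : ∀ w : {w : Xt.V // c.vMap w = X.root h},
      Nat.card {x : {ht : Xt.H // c.hMap ht = h} // f x = w} = c.d w.1 := by
    intro w
    have e : {x : {ht : Xt.H // c.hMap ht = h} // f x = w}
        ≃ {ht : Xt.H // Xt.root ht = w.1 ∧ c.hMap ht = h} :=
      { toFun := fun x => ⟨x.1.1, ⟨congrArg Subtype.val x.2, x.1.2⟩⟩
        invFun := fun y => ⟨⟨y.1, y.2.2⟩, Subtype.ext y.2.1⟩
        left_inv := fun x => rfl
        right_inv := fun y => rfl }
    rw [Nat.card_congr e]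
    exact (c.harm.balanced w.1 h w.2.symm).symm
  rw [e1, natCardSigma]
  simp only [e2]
  rw [← c.deg_eq (X.root h)]
  exact (Finset.sum_subtype _ (by simp) c.d).symm

theorem exists_unique_smul_bh (ht : Xt.H) :
    ∃! g : G, c.smulH g (c.bh (c.hMap ht)) = ht := by
  set h := c.hMap ht with hh
  let φ : G → {x : Xt.H // c.hMap x = h} :=
    fun g => ⟨c.smulH g (c.bh h), by rw [c.hMap_smulH, c.bh_spec]⟩
  have hinj : Function.Injective φ := by
    intro g g' hgg'
    exact c.smulH_cancel (congrArg Subtype.val hgg')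
  letI : Fintype {x : Xt.H // c.hMap x = h} := Fintype.ofFinite _
  have hcard : Fintype.card G = Fintype.card {x : Xt.H // c.hMap x = h} := by
    have h2 := c.card_hfiber h
    rw [Nat.card_eq_fintype_card] at h2
    exact h2.symm
  have hbij : Function.Bijective φ :=
    (Fintype.bijective_iff_injective_and_card φ).mpr ⟨hinj, hcard⟩
  obtain ⟨g, hg⟩ := hbij.2 ⟨ht, rfl⟩
  have hgval : c.smulH g (c.bh h) = ht := congrArg Subtype.val hg
  exact ⟨g, hgval, fun g' hg' => c.smulH_cancel (hg'.trans hgval.symm)⟩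

noncomputable def gOf (ht : Xt.H) : G := (c.exists_unique_smul_bh ht).choose

theorem gOf_spec (ht : Xt.H) : c.smulH (c.gOf ht) (c.bh (c.hMap ht)) = ht :=
  (c.exists_unique_smul_bh ht).choose_spec.1

theorem gOf_unique {g : G} {ht : Xt.H} (hg : c.smulH g (c.bh (c.hMap ht)) = ht) :
    g = c.gOf ht :=
  (c.exists_unique_smul_bh ht).choose_spec.2 g hg

theorem gOf_bh (h : X.H) : c.gOf (c.bh h) = 1 :=
  (c.gOf_unique (by rw [c.bh_spec, c.one_smulH])).symm

theorem gOf_smulH (a : G) (ht : Xt.H) : c.gOf (c.smulH a ht) = a * c.gOf ht :=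
  (c.gOf_unique (by rw [c.hMap_smulH, c.mul_smulH, c.gOf_spec])).symm

theorem exists_smul_eq_of_hMap_eq {ht ht' : Xt.H} (h : c.hMap ht' = c.hMap ht) :
    ∃ g : G, c.smulH g ht = ht' := by
  refine ⟨c.gOf ht' * (c.gOf ht)⁻¹, ?_⟩
  have e1 : c.smulH (c.gOf ht' * (c.gOf ht)⁻¹) ht
      = c.smulH (c.gOf ht' * (c.gOf ht)⁻¹) (c.smulH (c.gOf ht) (c.bh (c.hMap ht))) := by
    rw [c.gOf_spec]
  rw [e1, ← c.mul_smulH, inv_mul_cancel_right, ← h]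
  exact c.gOf_spec ht'

theorem exists_sOf (h : X.H) : ∃ s : G, c.smulV s (c.wv (X.root h)) = Xt.root (c.bh h) :=
  c.vertex_trans _ _ (by rw [c.wv_spec, ← c.root_hMap, c.bh_spec])

noncomputable def sOf (h : X.H) : G := (c.exists_sOf h).choose

theorem sOf_spec (h : X.H) : c.smulV (c.sOf h) (c.wv (X.root h)) = Xt.root (c.bh h) :=
  (c.exists_sOf h).choose_spec

theorem d_eq_card_stab (w : Xt.V) :
    c.d w = Nat.card {s : G // c.smulV s w = w} := by
  letI : Fintype {u : Xt.V // c.vMap u = c.vMap w} := Fintype.ofFinite _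
  let φ : G → {u : Xt.V // c.vMap u = c.vMap w} := fun g => ⟨c.smulV g w, c.vMap_smulV g w⟩
  have hsurj : Function.Surjective φ := by
    intro u
    obtain ⟨g, hg⟩ := c.vertex_trans w u.1 u.2.symm
    exact ⟨g, Subtype.ext hg⟩
  have key : ∀ u : {u : Xt.V // c.vMap u = c.vMap w},
      Nat.card {g : G // φ g = u} = Nat.card {s : G // c.smulV s w = w} := by
    intro u
    obtain ⟨g₀, hg₀⟩ := hsurj u
    have hg₀' : c.smulV g₀ w = u.1 := congrArg Subtype.val hg₀
    refine Nat.card_congr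
      { toFun := fun g => ⟨g₀⁻¹ * g.1, ?_⟩
        invFun := fun s => ⟨g₀ * s.1, ?_⟩
        left_inv := fun g => Subtype.ext (mul_inv_cancel_left g₀ g.1)
        right_inv := fun s => Subtype.ext (inv_mul_cancel_left g₀ s.1) }
    · have hgval : c.smulV g.1 w = u.1 := congrArg Subtype.val g.2
      rw [c.mul_smulV, hgval, ← hg₀', ← c.mul_smulV, inv_mul_cancel, c.one_smulV]
    · apply Subtype.ext
      show c.smulV (g₀ * s.1) w = u.1
      rw [c.mul_smulV, s.2, hg₀']
  have e1 : Nat.card G = Nat.card (Σ u : {u : Xt.V // c.vMap u = c.vMap w},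
      {g : G // φ g = u}) := Nat.card_congr (Equiv.sigmaFiberEquiv φ).symm
  rw [natCardSigma] at e1
  simp only [key] at e1
  rw [Finset.sum_const] at e1
  have e2 : Nat.card G
      = (Finset.univ : Finset {u : Xt.V // c.vMap u = c.vMap w}).card • c.d w := by
    have hd := c.deg_eq (c.vMap w)
    rw [Finset.sum_subtype (p := fun u => c.vMap u = c.vMap w)
      (Finset.univ.filter (fun u => c.vMap u = c.vMap w)) (by simp) c.d] at hd
    have e3 : ∀ u : {u : Xt.V // c.vMap u = c.vMap w}, u ∈ Finset.univ → c.d u.1 = c.d w := by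
      intro u _
      obtain ⟨g, hg⟩ := c.vertex_trans w u.1 u.2.symm
      rw [← hg, c.d_smulV]
    rw [Finset.sum_congr rfl e3, Finset.sum_const] at hd
    rw [Nat.card_eq_fintype_card, ← hd]
  haveI : Nonempty {u : Xt.V // c.vMap u = c.vMap w} := ⟨⟨w, rfl⟩⟩
  have hpos : 0 < (Finset.univ : Finset {u : Xt.V // c.vMap u = c.vMap w}).card := by
    rw [Finset.card_univ]
    exact Fintype.card_pos
  have := e2.symm.trans e1
  rw [smul_eq_mul, smul_eq_mul] at this
  exact Nat.eq_of_mul_eq_mul_left hpos this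

end GCover
end SerreGraph
end AuxFreeRes
namespace SerreGraph
namespace GCover

variable {G : Type} [CommGroup G] [Fintype G] {Xt X : SerreGraph} (c : GCover G Xt X)

/-- Index type for the loops added at the vertices: a vertex of `X` together with an
element of the stabilizer of the chosen base point of its fiber. -/
def Lp : Type := {p : X.V × G // c.smulV p.2 (c.wv p.1) = c.wv p.1}

instance : Finite c.Lp := by unfold Lp; infer_instance

noncomputable instance : Fintype c.Lp := Fintype.ofFinite _

/-- The resolved base graph: `X` with loops added at each vertex, one for each
stabilizer element. -/
noncomputable def Xf : SerreGraph where
  V := X.V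
  H := X.H ⊕ (c.Lp × Bool)
  fintypeV := inferInstance
  fintypeH := inferInstance
  decEqV := inferInstance
  decEqH := Classical.decEq _
  inv := Sum.elim (fun h => Sum.inl (X.inv h)) (fun q => Sum.inr (q.1, !q.2))
  inv_inv := by rintro (h | ⟨q, b⟩) <;> simp [X.inv_inv]
  inv_ne := by
    rintro (h | ⟨q, b⟩)
    · simp [X.inv_ne h]
    · cases b <;> simp
  root := Sum.elim X.root (fun q => q.1.1.1)

/-- The resolved cover graph. -/
noncomputable def Xtf : SerreGraph where
  V := X.V × G
  H := Xt.H ⊕ (c.Lp × Bool × G)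
  fintypeV := inferInstance
  fintypeH := inferInstance
  decEqV := Classical.decEq _
  decEqH := Classical.decEq _
  inv := Sum.elim (fun h => Sum.inl (Xt.inv h)) (fun q => Sum.inr (q.1, !q.2.1, q.2.2))
  inv_inv := by rintro (h | ⟨q, b, g⟩) <;> simp [Xt.inv_inv]
  inv_ne := by
    rintro (h | ⟨q, b, g⟩)
    · simp [Xt.inv_ne h]
    · cases b <;> simp
  root := Sum.elim (fun ht => (X.root (c.hMap ht), c.gOf ht * c.sOf (c.hMap ht)))
    (fun q => (q.1.1.1, if q.2.1 then q.1.1.2 * q.2.2 else q.2.2))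

@[simp] theorem Xf_inv_inl (h : X.H) : c.Xf.inv (Sum.inl h) = Sum.inl (X.inv h) := rfl
@[simp] theorem Xf_inv_inr (q : c.Lp × Bool) :
    c.Xf.inv (Sum.inr q) = Sum.inr (q.1, !q.2) := rfl
@[simp] theorem Xf_root_inl (h : X.H) : c.Xf.root (Sum.inl h) = X.root h := rfl
@[simp] theorem Xf_root_inr (q : c.Lp × Bool) : c.Xf.root (Sum.inr q) = q.1.1.1 := rfl
@[simp] theorem Xtf_inv_inl (h : Xt.H) : c.Xtf.inv (Sum.inl h) = Sum.inl (Xt.inv h) := rfl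
@[simp] theorem Xtf_inv_inr (q : c.Lp × Bool × G) :
    c.Xtf.inv (Sum.inr q) = Sum.inr (q.1, !q.2.1, q.2.2) := rfl
@[simp] theorem Xtf_root_inl (ht : Xt.H) :
    c.Xtf.root (Sum.inl ht) = (X.root (c.hMap ht), c.gOf ht * c.sOf (c.hMap ht)) := rfl
@[simp] theorem Xtf_root_inr (q : c.Lp × Bool × G) :
    c.Xtf.root (Sum.inr q) = (q.1.1.1, if q.2.1 then q.1.1.2 * q.2.2 else q.2.2) := rfl

/-- The projection of the resolved cover. -/
noncomputable def cfHom : Hom c.Xtf c.Xf where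
  vMap := Prod.fst
  hMap := Sum.elim (fun ht => Sum.inl (c.hMap ht)) (fun q => Sum.inr (q.1, q.2.1))
  hMap_inv := by
    rintro (ht | ⟨p, b, g⟩)
    · exact congrArg Sum.inl (c.hMap_inv ht)
    · rfl
  root_hMap := by rintro (ht | ⟨p, b, g⟩) <;> rfl

@[simp] theorem cfHom_vMap (w : c.Xtf.V) : c.cfHom.vMap w = w.1 := rfl
@[simp] theorem cfHom_hMap_inl (ht : Xt.H) :
    c.cfHom.hMap (Sum.inl ht) = Sum.inl (c.hMap ht) := rfl
@[simp] theorem cfHom_hMap_inr (q : c.Lp × Bool × G) :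
    c.cfHom.hMap (Sum.inr q) = Sum.inr (q.1, q.2.1) := rfl

theorem cf_harm : IsHarmonic c.cfHom (fun _ => 1) := by
  constructor
  · intro; exact Nat.one_pos
  · rintro ⟨v, g⟩ h hroot
    symm
    rw [Nat.card_eq_one_iff_unique]
    rcases h with h0 | ⟨p, b⟩
    · have hv : X.root h0 = v := hroot
      have key : ∀ ht : Xt.H, c.hMap ht = h0 → c.gOf ht * c.sOf h0 = g →
          ht = c.smulH (g * (c.sOf h0)⁻¹) (c.bh h0) := by
        intro ht he hg'
        have h1 := c.gOf_spec ht
        rw [he] at h1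
        have h2 : c.gOf ht = g * (c.sOf h0)⁻¹ := by
          rw [← hg', mul_inv_cancel_right]
        rw [← h1, h2]
      constructor
      · constructor
        rintro ⟨(ht₁ | q₁), hr₁, hm₁⟩ ⟨(ht₂ | q₂), hr₂, hm₂⟩
        · have e₁ : c.hMap ht₁ = h0 := Sum.inl.inj hm₁
          have e₂ : c.hMap ht₂ = h0 := Sum.inl.inj hm₂
          have r₁ : c.gOf ht₁ * c.sOf h0 = g := by
            have := congrArg Prod.snd hr₁
            simp only [Xtf_root_inl, e₁] at this
            exact this
          have r₂ : c.gOf ht₂ * c.sOf h0 = g := by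
            have := congrArg Prod.snd hr₂
            simp only [Xtf_root_inl, e₂] at this
            exact this
          apply Subtype.ext
          show Sum.inl ht₁ = Sum.inl ht₂
          rw [key ht₁ e₁ r₁, key ht₂ e₂ r₂]
        · exact absurd hm₂ (by simp)
        · exact absurd hm₁ (by simp)
        · exact absurd hm₁ (by simp)
      · refine ⟨⟨Sum.inl (c.smulH (g * (c.sOf h0)⁻¹) (c.bh h0)), ?_, ?_⟩⟩
        · have hm : c.hMap (c.smulH (g * (c.sOf h0)⁻¹) (c.bh h0)) = h0 := by
            rw [c.hMap_smulH, c.bh_spec]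
          have hg : c.gOf (c.smulH (g * (c.sOf h0)⁻¹) (c.bh h0)) = g * (c.sOf h0)⁻¹ := by
            rw [c.gOf_smulH, c.gOf_bh, mul_one]
          rw [Xtf_root_inl, hm, hg, inv_mul_cancel_right, hv]
        · show Sum.inl (c.hMap (c.smulH (g * (c.sOf h0)⁻¹) (c.bh h0))) = Sum.inl h0
          rw [c.hMap_smulH, c.bh_spec]
    · have hv : p.1.1 = v := hroot
      constructor
      · constructor
        rintro ⟨(ht₁ | ⟨p₁, b₁, g₁⟩), hr₁, hm₁⟩ ⟨(ht₂ | ⟨p₂, b₂, g₂⟩), hr₂, hm₂⟩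
        · exact absurd hm₁ (by simp)
        · exact absurd hm₁ (by simp)
        · exact absurd hm₂ (by simp)
        · have e₁ : p₁ = p ∧ b₁ = b := by
            have := Sum.inr.inj hm₁
            exact ⟨congrArg Prod.fst this, congrArg Prod.snd this⟩
          have e₂ : p₂ = p ∧ b₂ = b := by
            have := Sum.inr.inj hm₂
            exact ⟨congrArg Prod.fst this, congrArg Prod.snd this⟩
          obtain ⟨hp₁, hb₁⟩ := e₁
          obtain ⟨hp₂, hb₂⟩ := e₂
          have r₁ : (if b then p.1.2 * g₁ else g₁) = g := by
            have h' := congrArg Prod.snd hr₁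
            simp only [Xtf_root_inr] at h'
            rw [hp₁, hb₁] at h'
            exact h'
          have r₂ : (if b then p.1.2 * g₂ else g₂) = g := by
            have h' := congrArg Prod.snd hr₂
            simp only [Xtf_root_inr] at h'
            rw [hp₂, hb₂] at h'
            exact h'
          have hg : g₁ = g₂ := by
            cases b
            · simpa using r₁.trans r₂.symm
            · simp only [if_pos] at r₁ r₂
              exact mul_left_cancel (r₁.trans r₂.symm)
          apply Subtype.ext
          show Sum.inr (p₁, b₁, g₁) = Sum.inr (p₂, b₂, g₂)
          rw [hp₁, hb₁, hp₂, hb₂, hg]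
      · refine ⟨⟨Sum.inr (p, b, if b then p.1.2⁻¹ * g else g), ?_, ?_⟩⟩
        · rw [Xtf_root_inr]
          cases b
          · simp [hv]; rfl
          · simp [hv, mul_inv_cancel_left]; rfl
        · rfl

theorem card_filter_fst_eq {α β : Type} [Fintype α] [DecidableEq α] [Fintype β] (v : α)
    (inst : DecidablePred (fun w : α × β => w.1 = v)) :
    (@Finset.filter _ (fun w : α × β => w.1 = v) inst Finset.univ).card = Fintype.card β := by
  rw [show (@Finset.filter _ (fun w : α × β => w.1 = v) inst Finset.univ)
      = ({v} : Finset α) ×ˢ (Finset.univ : Finset β) by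
    ext w
    simp only [Finset.mem_filter, Finset.mem_univ, true_and, Finset.mem_product,
      Finset.mem_singleton, and_true]]
  simp

theorem cf_deg_eq (v : c.Xf.V) :
    ∑ w ∈ Finset.univ.filter (fun w => c.cfHom.vMap w = v), (fun _ => 1 : c.Xtf.V → ℕ) w
      = Fintype.card G := by
  classical
  rw [Finset.sum_const, smul_eq_mul, mul_one]
  exact card_filter_fst_eq (α := X.V) (β := G) v _

/-- The resolved free cover. -/
noncomputable def cf : GCover G c.Xtf c.Xf where
  toHom := c.cfHom
  d := fun _ => 1
  harm := c.cf_harm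
  deg_eq := c.cf_deg_eq
  smulV := fun a w => (w.1, a * w.2)
  smulH := fun a => Sum.elim (fun ht => Sum.inl (c.smulH a ht))
    (fun q => Sum.inr (q.1, q.2.1, a * q.2.2))
  one_smulV := by intro w; simp; rfl
  mul_smulV := by intros g g' w; simp [mul_assoc]; rfl
  one_smulH := by rintro (ht | ⟨p, b, g⟩) <;> simp [c.one_smulH] <;> rfl
  mul_smulH := by intro g g'; rintro (ht | ⟨p, b, g₀⟩) <;> simp [c.mul_smulH, mul_assoc] <;> rfl
  smulH_inv := by
    intro g; rintro (ht | ⟨p, b, g₀⟩)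
    · exact congrArg Sum.inl (c.smulH_inv g ht)
    · rfl
  root_smulH := by
    intro a
    rintro (ht | ⟨p, b, g₀⟩)
    · show c.Xtf.root (Sum.inl (c.smulH a ht)) = _
      rw [Xtf_root_inl, c.hMap_smulH, c.gOf_smulH]
      show _ = ((X.root (c.hMap ht)), a * (c.gOf ht * c.sOf (c.hMap ht)))
      rw [mul_assoc]
    · show c.Xtf.root (Sum.inr (p, b, a * g₀)) = _
      rw [Xtf_root_inr, Xtf_root_inr]
      cases b <;> simp [mul_left_comm] <;> rfl
  vMap_smulV := fun g w => rfl
  hMap_smulH := by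
    intro g; rintro (ht | ⟨p, b, g₀⟩)
    · exact congrArg Sum.inl (c.hMap_smulH g ht)
    · rfl
  d_smulV := fun _ _ => rfl
  vertex_trans := by
    intro w w' hww'
    exact ⟨w'.2 * w.2⁻¹, Prod.ext hww' (inv_mul_cancel_right w'.2 w.2)⟩
  edge_trans := by
    rintro (ht | ⟨p, b, g₀⟩) (ht' | ⟨p', b', g₀'⟩) hmap
    · rcases hmap with h1 | h1
      · obtain ⟨g, hg⟩ := c.exists_smul_eq_of_hMap_eq (Sum.inl.inj h1)
        exact ⟨g, Or.inl (congrArg Sum.inl hg)⟩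
      · simp only [cfHom_hMap_inl, Xf_inv_inl] at h1
        have h2 : c.hMap (Xt.inv ht') = c.hMap ht := by
          rw [c.hMap_inv, Sum.inl.inj h1, X.inv_inv]
        obtain ⟨g, hg⟩ := c.exists_smul_eq_of_hMap_eq h2
        refine ⟨g, Or.inr ?_⟩
        show Sum.inl (c.smulH g ht) = Sum.inl (Xt.inv ht')
        rw [hg]
    · rcases hmap with h1 | h1 <;> exact absurd h1 (by simp)
    · rcases hmap with h1 | h1 <;> exact absurd h1 (by simp)
    · refine ⟨g₀' * g₀⁻¹, ?_⟩
      rcases hmap with h1 | h1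
      · simp only [cfHom_hMap_inr] at h1
        have hp : p' = p := congrArg Prod.fst (Sum.inr.inj h1)
        have hb : b' = b := congrArg Prod.snd (Sum.inr.inj h1)
        refine Or.inl ?_
        show Sum.inr (p, b, g₀' * g₀⁻¹ * g₀) = Sum.inr (p', b', g₀')
        rw [hp, hb, inv_mul_cancel_right]
      · simp only [cfHom_hMap_inr, Xf_inv_inr] at h1
        have hp : p' = p := congrArg Prod.fst (Sum.inr.inj h1)
        have hb : b' = !b := congrArg Prod.snd (Sum.inr.inj h1)
        refine Or.inr ?_
        show Sum.inr (p, b, g₀' * g₀⁻¹ * g₀) = Sum.inr (p', !b', g₀')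
        rw [hp, hb, Bool.not_not, inv_mul_cancel_right]
  edge_free := by
    intro g
    rintro (ht | ⟨p, b, g₀⟩) hfix
    · rcases hfix with h1 | h1
      · exact c.edge_free g ht (Or.inl (Sum.inl.inj h1))
      · exact c.edge_free g ht (Or.inr (Sum.inl.inj h1))
    · rcases hfix with h1 | h1
      · have : g * g₀ = g₀ := by
          have := Sum.inr.inj h1
          exact congrArg (fun x => x.2.2) this
        exact mul_right_cancel (this.trans (one_mul g₀).symm)
      · have hb : b = !b := by
          have := Sum.inr.inj h1
          exact congrArg (fun x => x.2.1) this
        exact absurd hb (by cases b <;> simp)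

@[simp] theorem cf_vMap (w : c.Xtf.V) : c.cf.vMap w = w.1 := rfl
@[simp] theorem cf_hMap_inl (ht : Xt.H) :
    c.cf.hMap (Sum.inl ht) = Sum.inl (c.hMap ht) := rfl
@[simp] theorem cf_hMap_inr (q : c.Lp × Bool × G) :
    c.cf.hMap (Sum.inr q) = Sum.inr (q.1, q.2.1) := rfl
@[simp] theorem cf_smulV (a : G) (w : c.Xtf.V) : c.cf.smulV a w = (w.1, a * w.2) := rfl
@[simp] theorem cf_smulH_inl (a : G) (ht : Xt.H) :
    c.cf.smulH a (Sum.inl ht) = Sum.inl (c.smulH a ht) := rfl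
@[simp] theorem cf_smulH_inr (a : G) (q : c.Lp × Bool × G) :
    c.cf.smulH a (Sum.inr q) = Sum.inr (q.1, q.2.1, a * q.2.2) := rfl
@[simp] theorem cf_d (w : c.Xtf.V) : c.cf.d w = 1 := rfl

end GCover
end SerreGraph
namespace SerreGraph
namespace GCover

variable {G : Type} [CommGroup G] [Fintype G] {Xt X : SerreGraph} (c : GCover G Xt X)

/-- The contracted edges downstairs: the added loops. -/
noncomputable def Ff : Finset c.Xf.Edge :=
  Finset.univ.image (fun q : c.Lp × Bool => c.Xf.edgeOf (Sum.inr q))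

/-- The contracted edges upstairs: the lifts of the added loops. -/
noncomputable def Fft : Finset c.Xtf.Edge :=
  Finset.univ.image (fun q : c.Lp × Bool × G => c.Xtf.edgeOf (Sum.inr q))

theorem mem_Ff_inr (q : c.Lp × Bool) : c.Xf.edgeOf (Sum.inr q) ∈ c.Ff :=
  Finset.mem_image_of_mem _ (Finset.mem_univ q)

theorem not_mem_Ff_inl (h0 : X.H) : c.Xf.edgeOf (Sum.inl h0) ∉ c.Ff := by
  intro hmem
  obtain ⟨q, -, hq⟩ := Finset.mem_image.mp hmem
  rcases (edgeOf_eq_iff c.Xf _ _).mp hq with he | he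
  · exact absurd he (by simp)
  · rw [Xf_inv_inr] at he
    exact absurd he (by simp)

theorem mem_Fft_inr (q : c.Lp × Bool × G) : c.Xtf.edgeOf (Sum.inr q) ∈ c.Fft :=
  Finset.mem_image_of_mem _ (Finset.mem_univ q)

theorem not_mem_Fft_inl (ht : Xt.H) : c.Xtf.edgeOf (Sum.inl ht) ∉ c.Fft := by
  intro hmem
  obtain ⟨q, -, hq⟩ := Finset.mem_image.mp hmem
  rcases (edgeOf_eq_iff c.Xtf _ _).mp hq with he | he
  · exact absurd he (by simp)
  · rw [Xtf_inv_inr] at he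
    exact absurd he (by simp)

/-- The contraction data downstairs. -/
noncomputable def cd : ContractionData c.Xf X c.Ff where
  vMap := id
  hMap := fun h => match h with
    | Sum.inl h0 => fun _ => h0
    | Sum.inr q => fun hh => absurd (c.mem_Ff_inr q) hh
  hMap_injective := by
    rintro (h₁ | q₁) hh₁ (h₂ | q₂) hh₂ heq
    · exact congrArg Sum.inl heq
    · exact absurd (c.mem_Ff_inr q₂) hh₂
    · exact absurd (c.mem_Ff_inr q₁) hh₁
    · exact absurd (c.mem_Ff_inr q₁) hh₁
  hMap_surjective := fun k => ⟨Sum.inl k, c.not_mem_Ff_inl k, rfl⟩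
  hMap_inv := by
    rintro (h0 | q) hh hh'
    · rfl
    · exact absurd (c.mem_Ff_inr q) hh
  root_hMap := by
    rintro (h0 | q) hh
    · rfl
    · exact absurd (c.mem_Ff_inr q) hh
  vMap_surjective := fun v => ⟨v, rfl⟩
  vMap_eq_iff := by
    intro u v
    constructor
    · intro huv
      have huv' : u = v := huv
      exact huv' ▸ Relation.ReflTransGen.refl
    · intro hr
      induction hr with
      | refl => rfl
      | tail _ hstep ih =>
        obtain ⟨h, hmem, hr1, hr2⟩ := hstep
        rcases h with h0 | q
        · exact absurd hmem (c.not_mem_Ff_inl h0)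
        · have hbc : _ = _ := hr1.symm.trans hr2
          exact ih.trans hbc
  
theorem stab_smul (p : c.Lp) (g₀ : G) :
    c.smulV (p.1.2 * g₀) (c.wv p.1.1) = c.smulV g₀ (c.wv p.1.1) := by
  rw [mul_comm, c.mul_smulV, p.2]

theorem step_Fft {a b : c.Xtf.V} (h : c.Xtf.contractStep c.Fft a b) :
    c.smulV a.2 (c.wv a.1) = c.smulV b.2 (c.wv b.1) := by
  obtain ⟨hh, hmem, hr1, hr2⟩ := h
  rcases hh with ht | ⟨p, b', g₀⟩
  · exact absurd hmem (c.not_mem_Fft_inl ht)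
  · subst hr1
    subst hr2
    rw [Xtf_inv_inr]
    cases b'
    · show c.smulV g₀ (c.wv p.1.1) = c.smulV (if !false then p.1.2 * g₀ else g₀) (c.wv p.1.1)
      simp only [Bool.not_false, if_pos]
      exact (c.stab_smul p g₀).symm
    · show c.smulV (p.1.2 * g₀) (c.wv p.1.1) = c.smulV (if !true then p.1.2 * g₀ else g₀) (c.wv p.1.1)
      simp only [Bool.not_true, if_neg Bool.false_ne_true]
      exact c.stab_smul p g₀

theorem vmapt_back (u v : c.Xtf.V)
    (hr : Relation.ReflTransGen (c.Xtf.contractStep c.Fft) u v) :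
    c.smulV u.2 (c.wv u.1) = c.smulV v.2 (c.wv v.1) := by
  induction hr with
  | refl => rfl
  | tail _ hstep ih => exact ih.trans (c.step_Fft hstep)

theorem vmapt_eq_iff (u v : c.Xtf.V) :
    c.smulV u.2 (c.wv u.1) = c.smulV v.2 (c.wv v.1)
      ↔ Relation.ReflTransGen (c.Xtf.contractStep c.Fft) u v := by
  constructor
  · obtain ⟨a1, a2⟩ := u
    obtain ⟨b1, b2⟩ := v
    intro heq
    have h1 : a1 = b1 := by
      have h' := congrArg c.vMap heq
      rwa [c.vMap_smulV, c.vMap_smulV, c.wv_spec, c.wv_spec] at h'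
    subst h1
    have hs : c.smulV (a2⁻¹ * b2) (c.wv a1) = c.wv a1 := by
      have h' := congrArg (c.smulV a2⁻¹) heq.symm
      rwa [← c.mul_smulV, ← c.mul_smulV, inv_mul_cancel, c.one_smulV] at h'
    apply Relation.ReflTransGen.single
    refine ⟨Sum.inr (⟨(a1, a2⁻¹ * b2), hs⟩, false, a2), c.mem_Fft_inr _, ?_, ?_⟩
    · show ((a1 : X.V), if false then (a2⁻¹ * b2) * a2 else a2) = (a1, a2)
      simp
    · rw [Xtf_inv_inr]
      show ((a1 : X.V), if !false then (a2⁻¹ * b2) * a2 else a2) = (a1, b2)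
      simp only [Bool.not_false, if_pos]
      have : a2⁻¹ * b2 * a2 = b2 := by
        rw [mul_comm, ← mul_assoc, mul_inv_cancel, one_mul]
      rw [this]
  · exact c.vmapt_back u v

/-- The contraction data upstairs. -/
noncomputable def cdt : ContractionData c.Xtf Xt c.Fft where
  vMap := fun w => c.smulV w.2 (c.wv w.1)
  hMap := fun h => match h with
    | Sum.inl ht => fun _ => ht
    | Sum.inr q => fun hh => absurd (c.mem_Fft_inr q) hh
  hMap_injective := by
    rintro (h₁ | q₁) hh₁ (h₂ | q₂) hh₂ heq
    · exact congrArg Sum.inl heq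
    · exact absurd (c.mem_Fft_inr q₂) hh₂
    · exact absurd (c.mem_Fft_inr q₁) hh₁
    · exact absurd (c.mem_Fft_inr q₁) hh₁
  hMap_surjective := fun k => ⟨Sum.inl k, c.not_mem_Fft_inl k, rfl⟩
  hMap_inv := by
    rintro (ht | q) hh hh'
    · rfl
    · exact absurd (c.mem_Fft_inr q) hh
  root_hMap := by
    rintro (ht | q) hh
    · show Xt.root ht
        = c.smulV (c.gOf ht * c.sOf (c.hMap ht)) (c.wv (X.root (c.hMap ht)))
      rw [c.mul_smulV, c.sOf_spec, ← c.root_smulH, c.gOf_spec]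
    · exact absurd (c.mem_Fft_inr q) hh
  vMap_surjective := by
    intro w
    obtain ⟨g, hg⟩ := c.vertex_trans (c.wv (c.vMap w)) w (by rw [c.wv_spec])
    exact ⟨(c.vMap w, g), hg⟩
  vMap_eq_iff := fun u v => c.vmapt_eq_iff u v

@[simp] theorem cdt_vMap (w : c.Xtf.V) : c.cdt.vMap w = c.smulV w.2 (c.wv w.1) := rfl

end GCover
end SerreGraph
open SerreGraph in
/-- **Lemma (free resolution).** Every harmonic `G`-cover `p : X̃ → X` with finite abelian
Galois group `G` is an edge contraction of a free `G`-cover `p_f : X̃_f → X_f`: there are a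
free `G`-cover `p_f`, edges `F_f ⊆ E(X_f)` with preimage `F̃_f = p_f⁻¹(F_f)`, and
contraction data exhibiting `X = (X_f)_{F_f}` and `X̃ = (X̃_f)_{F̃_f}`, compatible with the
projections and the `G`-actions, such that the local degree of `p` at each contracted
vertex equals the global degree of `p_f` restricted to the corresponding connected
component. -/
theorem exists_free_resolution
    (G : Type) [CommGroup G] [Fintype G] (X Xt : SerreGraph)
    (hX : X.Connected) (hXt : Xt.Connected) (c : GCover G Xt X) :
    ∃ (Xf Xtf : SerreGraph) (cf : GCover G Xtf Xf) (Ff : Finset Xf.Edge)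
      (Fft : Finset Xtf.Edge)
      (cd : ContractionData Xf X Ff) (cdt : ContractionData Xtf Xt Fft),
      cf.IsFree ∧
      (∀ e : Xtf.Edge, e ∈ Fft ↔ cf.toHom.edgeMap e ∈ Ff) ∧
      (∀ w : Xtf.V, c.vMap (cdt.vMap w) = cd.vMap (cf.vMap w)) ∧
      (∀ (h : Xtf.H) (hh : Xtf.edgeOf h ∉ Fft) (hh' : Xf.edgeOf (cf.hMap h) ∉ Ff),
        c.hMap (cdt.hMap h hh) = cd.hMap (cf.hMap h) hh') ∧
      (∀ (g : G) (w : Xtf.V), cdt.vMap (cf.smulV g w) = c.smulV g (cdt.vMap w)) ∧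
      (∀ (g : G) (h : Xtf.H) (hh : Xtf.edgeOf h ∉ Fft)
          (hh' : Xtf.edgeOf (cf.smulH g h) ∉ Fft),
        cdt.hMap (cf.smulH g h) hh' = c.smulH g (cdt.hMap h hh)) ∧
      (∀ w : Xtf.V, c.d (cdt.vMap w) =
        Nat.card {u : Xtf.V // cf.vMap u = cf.vMap w ∧
          Relation.ReflTransGen (Xtf.contractStep Fft) u w}) := by
  refine ⟨c.Xf, c.Xtf, c.cf, c.Ff, c.Fft, c.cd, c.cdt, ?_, ?_, ?_, ?_, ?_, ?_, ?_⟩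
  · exact fun w => rfl
  · intro e
    obtain ⟨h, rfl⟩ := c.Xtf.edgeOf_surjective e
    rcases h with ht | q
    · exact iff_of_false (c.not_mem_Fft_inl ht) (c.not_mem_Ff_inl (c.hMap ht))
    · exact iff_of_true (c.mem_Fft_inr q) (c.mem_Ff_inr (q.1, q.2.1))
  · intro w
    show c.vMap (c.smulV w.2 (c.wv w.1)) = w.1
    rw [c.vMap_smulV, c.wv_spec]
  · rintro (ht | q) hh hh'
    · rfl
    · exact absurd (c.mem_Fft_inr q) hh
  · intro g w
    show c.smulV (g * w.2) (c.wv w.1) = c.smulV g (c.smulV w.2 (c.wv w.1))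
    rw [c.mul_smulV]
  · rintro g (ht | q) hh hh'
    · rfl
    · exact absurd (c.mem_Fft_inr q) hh
  · rintro ⟨v, g⟩
    show c.d (c.smulV g (c.wv v)) = _
    rw [c.d_smulV, c.d_eq_card_stab]
    refine Nat.card_congr
      { toFun := fun s => ⟨((v, s.1 * g) : c.Xtf.V), rfl,
          (c.vmapt_eq_iff (v, s.1 * g) (v, g)).mp
            (by show c.smulV (s.1 * g) (c.wv v) = c.smulV g (c.wv v)
                rw [mul_comm, c.mul_smulV, s.2])⟩
        invFun := fun u => ⟨u.1.2 * g⁻¹, ?_⟩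
        left_inv := fun s => Subtype.ext (mul_inv_cancel_right s.1 g)
        right_inv := fun u => Subtype.ext
          (Prod.ext u.2.1.symm (inv_mul_cancel_right u.1.2 g)) }
    have hr := (c.vmapt_eq_iff u.1 (v, g)).mpr u.2.2
    have h1 : u.1.1 = v := u.2.1
    rw [h1] at hr
    show c.smulV (u.1.2 * g⁻¹) (c.wv v) = c.wv v
    rw [mul_comm, c.mul_smulV, hr, ← c.mul_smulV, inv_mul_cancel, c.one_smulV]
end

section
/- Let X be a finite connected graph, let n = {n_e}_{e∈E(X)} be positive integers indexed by the edges of X, and let X_n be the graph obtained from X by replacing each edge e with a chain (path) of n_e edges. Then the number of spanning trees of X_n equals J_X(n_e), the Jacobian polynomial of X evaluated at x_e = n_e. -/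
set_option autoImplicit false
set_option maxHeartbeats 1000000

namespace SerreGraph

section Aux

/-- If two half-edges have the same edge, they are equal or inverse. -/
lemma edgeOf_eq_or (X : SerreGraph) {h h' : X.H} (he : X.edgeOf h = X.edgeOf h') :
    h' = h ∨ h' = X.inv h := by
  have resp : ∀ a b : X.H, b = X.inv a →
      (a = h ∨ a = X.inv h) = (b = h ∨ b = X.inv h) := by
    intro a b hb
    subst hb
    apply propext
    constructor
    · rintro (rfl | rfl)
      · exact Or.inr rfl
      · exact Or.inl (X.inv_inv h)
    · rintro (hh | hh)
      · exact Or.inr (by rw [← hh, X.inv_inv])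
      · exact Or.inl (by
          have := congrArg X.inv hh
          rwa [X.inv_inv, X.inv_inv] at this)
  have key := congrArg (Quot.lift (fun a => a = h ∨ a = X.inv h) resp) he
  have : (h = h ∨ h = X.inv h) = (h' = h ∨ h' = X.inv h) := key
  exact this ▸ Or.inl rfl

/-- One step of adjacency through edges in `S`. -/
def tStep (W : SerreGraph) (S : Finset W.Edge) (a b : W.V) : Prop :=
  ∃ h, W.root h = a ∧ W.root (W.inv h) = b ∧ W.edgeOf h ∈ S

lemma tStep_symm (W : SerreGraph) (S : Finset W.Edge) : Symmetric (W.tStep S) := by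
  rintro a b ⟨h, rfl, rfl, hS⟩
  exact ⟨W.inv h, rfl, by rw [W.inv_inv], by rwa [W.edgeOf_inv]⟩

lemma tConn_symm (W : SerreGraph) (S : Finset W.Edge) :
    Symmetric (Relation.ReflTransGen (W.tStep S)) :=
  haveI : Std.Symm (W.tStep S) := ⟨fun _ _ h => W.tStep_symm S h⟩
  fun _ _ h => Std.Symm.symm _ _ h

variable (X : SerreGraph) (o : X.Orientation) (n : X.Edge → ℕ)

/-- The edge of the subdivision corresponding to the `i`-th chain edge of `e`. -/
noncomputable def sEd (e : X.Edge) (i : Fin (n e)) : (X.subdivide o n).Edge :=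
  (X.subdivide o n).edgeOf ⟨e, (i, false)⟩

/-- The index of an edge of the subdivision. -/
noncomputable def sIdx : (X.subdivide o n).Edge → Σ e : X.Edge, Fin (n e) :=
  Quot.lift (fun h => ⟨h.1, h.2.1⟩) (by rintro ⟨e, i, b⟩ _ rfl; rfl)

lemma sIdx_sEd (e : X.Edge) (i : Fin (n e)) : X.sIdx o n (X.sEd o n e i) = ⟨e, i⟩ := rfl

lemma sEd_inj {e e' : X.Edge} {i : Fin (n e)} {i' : Fin (n e')}
    (h : X.sEd o n e i = X.sEd o n e' i') :
    (⟨e, i⟩ : Σ e : X.Edge, Fin (n e)) = ⟨e', i'⟩ :=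
  congrArg (X.sIdx o n) h

lemma edgeOf_sub (e : X.Edge) (i : Fin (n e)) (b : Bool) :
    (X.subdivide o n).edgeOf ⟨e, (i, b)⟩ = X.sEd o n e i := by
  cases b
  · rfl
  · exact (X.subdivide o n).edgeOf_inv ⟨e, (i, false)⟩

lemma sEd_surj (y : (X.subdivide o n).Edge) : ∃ e i, X.sEd o n e i = y := by
  obtain ⟨⟨e, i, b⟩, rfl⟩ := (X.subdivide o n).edgeOf_surjective y
  exact ⟨e, i, (X.edgeOf_sub o n e i b).symm⟩

noncomputable def sEquiv : (Σ e : X.Edge, Fin (n e)) ≃ (X.subdivide o n).Edge :=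
  Equiv.ofBijective (fun p => X.sEd o n p.1 p.2)
    ⟨fun p q h => by
      obtain ⟨e, i⟩ := p; obtain ⟨e', i'⟩ := q; exact X.sEd_inj o n h,
     fun y => by obtain ⟨e, i, h⟩ := X.sEd_surj o n y; exact ⟨⟨e, i⟩, h⟩⟩

lemma card_V_sub :
    Fintype.card (X.subdivide o n).V = Fintype.card X.V + ∑ e : X.Edge, (n e - 1) := by
  classical
  have h1 : Fintype.card (X.subdivide o n).V
      = Fintype.card (X.V ⊕ (e : X.Edge) × Fin (n e - 1)) :=
    Fintype.card_congr' rfl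
  rw [h1, Fintype.card_sum, Fintype.card_sigma]
  simp

lemma card_E_sub : Fintype.card (X.subdivide o n).Edge = ∑ e : X.Edge, n e := by
  classical
  rw [← Fintype.card_congr (X.sEquiv o n), Fintype.card_sigma]
  simp

lemma sum_pred (hn : ∀ e, 0 < n e) :
    (∑ e : X.Edge, (n e - 1)) + Fintype.card X.Edge = ∑ e : X.Edge, n e := by
  classical
  rw [Fintype.card, Finset.card_eq_sum_ones, ← Finset.sum_add_distrib]
  exact Finset.sum_congr rfl fun e _ => by have := hn e; omega

end Aux

end SerreGraph
namespace SerreGraph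

section Aux2

variable (X : SerreGraph) (o : X.Orientation) (n : X.Edge → ℕ)

lemma subVertex_zero (e : X.Edge) :
    X.subVertex o n e 0 = Sum.inl (X.root (o.pick e)) := by
  simp [subVertex]

lemma subVertex_last (e : X.Edge) (h : 0 < n e) :
    X.subVertex o n e (n e) = Sum.inl (X.root (X.inv (o.pick e))) := by
  unfold subVertex
  rw [dif_neg (by omega), dif_neg (by omega)]

lemma subVertex_mid (e : X.Edge) (j : ℕ) (h0 : j ≠ 0) (h : j < n e) :
    X.subVertex o n e j = Sum.inr ⟨e, ⟨j - 1, by omega⟩⟩ := by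
  unfold subVertex
  rw [dif_neg h0, dif_pos h]

lemma sub_root (e : X.Edge) (i : Fin (n e)) (b : Bool) :
    (X.subdivide o n).root ⟨e, (i, b)⟩
      = X.subVertex o n e (if b then (i : ℕ) + 1 else (i : ℕ)) := rfl

lemma chain_step (S : Finset (X.subdivide o n).Edge) (e : X.Edge) (i : Fin (n e))
    (hS : X.sEd o n e i ∈ S) :
    (X.subdivide o n).tStep S (X.subVertex o n e (i : ℕ))
      (X.subVertex o n e ((i : ℕ) + 1)) := by
  refine ⟨⟨e, (i, false)⟩, rfl, ?_, hS⟩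
  rfl

lemma chain_conn (S : Finset (X.subdivide o n).Edge) (e : X.Edge) (a b : ℕ)
    (hab : a ≤ b) (hb : b ≤ n e)
    (hall : ∀ i : Fin (n e), a ≤ (i : ℕ) → (i : ℕ) < b → X.sEd o n e i ∈ S) :
    Relation.ReflTransGen ((X.subdivide o n).tStep S)
      (X.subVertex o n e a) (X.subVertex o n e b) := by
  induction b, hab using Nat.le_induction with
  | base => exact Relation.ReflTransGen.refl
  | succ b hab ih =>
    have hb' : b < n e := by omega
    refine Relation.ReflTransGen.tail (ih (by omega) (fun i h1 h2 => hall i h1 (by omega))) ?_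
    have := X.chain_step o n S e ⟨b, hb'⟩ (hall ⟨b, hb'⟩ hab (by simp))
    simpa using this

lemma conn_inr (S : Finset (X.subdivide o n).Edge) (e : X.Edge) (j : Fin (n e - 1)) (m : ℕ)
    (hone : ∀ i : Fin (n e), (i : ℕ) ≠ m → X.sEd o n e i ∈ S) :
    ∃ v : X.V, Relation.ReflTransGen ((X.subdivide o n).tStep S)
      (Sum.inr ⟨e, j⟩ : (X.subdivide o n).V) (Sum.inl v) := by
  have hj1 : (j : ℕ) + 1 < n e := by have := j.2; omega
  have hmid : (Sum.inr ⟨e, j⟩ : (X.subdivide o n).V) = X.subVertex o n e ((j : ℕ) + 1) := by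
    rw [X.subVertex_mid o n e _ (by omega) hj1]
    congr 1
  by_cases hc : (j : ℕ) + 1 ≤ m
  · refine ⟨X.root (o.pick e), ?_⟩
    have h1 := X.chain_conn o n S e 0 ((j : ℕ) + 1) (by omega) (by omega)
      (fun i h0 hi => hone i (by omega))
    have h2 := (X.subdivide o n).tConn_symm S h1
    rw [X.subVertex_zero o n e] at h2
    rw [hmid]
    exact h2
  · refine ⟨X.root (X.inv (o.pick e)), ?_⟩
    have h1 := X.chain_conn o n S e ((j : ℕ) + 1) (n e) (by omega) le_rfl
      (fun i hi _ => hone i (by omega))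
    rw [X.subVertex_last o n e (by omega)] at h1
    rw [hmid]
    exact h1

lemma lift_conn (hn : ∀ e, 0 < n e) (S : Finset (X.subdivide o n).Edge)
    (T : Finset X.Edge)
    (hTS : ∀ e ∈ T, ∀ i : Fin (n e), X.sEd o n e i ∈ S) {u v : X.V}
    (huv : Relation.ReflTransGen (X.tStep T) u v) :
    Relation.ReflTransGen ((X.subdivide o n).tStep S)
      (Sum.inl u : (X.subdivide o n).V) (Sum.inl v) := by
  induction huv with
  | refl => exact Relation.ReflTransGen.refl
  | tail hab hbc ih =>
    refine ih.trans ?_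
    obtain ⟨h, rfl, rfl, hT⟩ := hbc
    have hpe : X.edgeOf (o.pick (X.edgeOf h)) = X.edgeOf h := o.pick_spec _
    have hchain : Relation.ReflTransGen ((X.subdivide o n).tStep S)
        (Sum.inl (X.root (o.pick (X.edgeOf h))) : (X.subdivide o n).V)
        (Sum.inl (X.root (X.inv (o.pick (X.edgeOf h))))) := by
      have h1 := X.chain_conn o n S (X.edgeOf h) 0 (n (X.edgeOf h)) (Nat.zero_le _) le_rfl
        (fun i _ _ => hTS _ hT i)
      rwa [X.subVertex_zero o n, X.subVertex_last o n _ (hn _)] at h1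
    rcases X.edgeOf_eq_or hpe with h1 | h1
    · rw [h1]; exact hchain
    · rw [h1, X.inv_inv]
      exact (X.subdivide o n).tConn_symm S hchain

end Aux2

end SerreGraph
namespace SerreGraph

section Aux3

variable (X : SerreGraph) (o : X.Orientation) (n : X.Edge → ℕ)

/-- Edges of `X` whose full chain is contained in `S`. -/
noncomputable def sKof (S : Finset (X.subdivide o n).Edge) : Finset X.Edge :=
  Finset.univ.filter fun e => ∀ i : Fin (n e), X.sEd o n e i ∈ S

lemma mem_sKof {S : Finset (X.subdivide o n).Edge} {e : X.Edge} :
    e ∈ X.sKof o n S ↔ ∀ i : Fin (n e), X.sEd o n e i ∈ S := by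
  simp [sKof]

/-- Projection of vertices of the subdivision to vertices of `X`. -/
noncomputable def sProj (S : Finset (X.subdivide o n).Edge) :
    (X.subdivide o n).V → X.V :=
  Sum.elim id fun p =>
    if ∀ i : Fin (n p.1), (i : ℕ) ≤ (p.2 : ℕ) → X.sEd o n p.1 i ∈ S
    then X.root (o.pick p.1) else X.root (X.inv (o.pick p.1))

lemma sProj_inl (S : Finset (X.subdivide o n).Edge) (v : X.V) :
    X.sProj o n S (Sum.inl v) = v := rfl

lemma sProj_inr (S : Finset (X.subdivide o n).Edge) (e : X.Edge) (j : Fin (n e - 1)) :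
    X.sProj o n S (Sum.inr ⟨e, j⟩)
      = if ∀ i : Fin (n e), (i : ℕ) ≤ (j : ℕ) → X.sEd o n e i ∈ S
        then X.root (o.pick e) else X.root (X.inv (o.pick e)) := rfl

lemma kof_step (S : Finset (X.subdivide o n).Edge) (e : X.Edge)
    (hK : e ∈ X.sKof o n S) :
    X.tStep (X.sKof o n S) (X.root (o.pick e)) (X.root (X.inv (o.pick e))) :=
  ⟨o.pick e, rfl, rfl, by rwa [o.pick_spec]⟩

lemma proj_chain_step (S : Finset (X.subdivide o n).Edge) (e : X.Edge) (k : Fin (n e))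
    (hSk : X.sEd o n e k ∈ S) :
    Relation.ReflTransGen (X.tStep (X.sKof o n S))
      (X.sProj o n S (X.subVertex o n e (k : ℕ)))
      (X.sProj o n S (X.subVertex o n e ((k : ℕ) + 1))) := by
  classical
  have hk := k.2
  by_cases h0 : (k : ℕ) = 0
  · by_cases h1 : (k : ℕ) + 1 = n e
    · -- single-edge chain
      rw [h0] at h1 ⊢
      rw [X.subVertex_zero o n e, h1, X.subVertex_last o n e (by omega)]
      rw [X.sProj_inl, X.sProj_inl]
      refine Relation.ReflTransGen.single (X.kof_step o n S e ?_)
      rw [mem_sKof]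
      intro i
      have : i = k := Fin.ext (by omega)
      rwa [this]
    · rw [h0, X.subVertex_zero o n e, X.sProj_inl]
      rw [X.subVertex_mid o n e 1 (by omega) (by omega), X.sProj_inr]
      rw [if_pos ?_]
      · intro i hi
        have : i = k := Fin.ext (by simp at hi ⊢; omega)
        rwa [this]
  · by_cases h1 : (k : ℕ) + 1 = n e
    · rw [X.subVertex_mid o n e (k : ℕ) h0 hk, X.sProj_inr,
        h1, X.subVertex_last o n e (by omega), X.sProj_inl]
      by_cases hc : ∀ i : Fin (n e), (i : ℕ) ≤ ((⟨(k : ℕ) - 1, by omega⟩ : Fin (n e - 1)) : ℕ)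
          → X.sEd o n e i ∈ S
      · rw [if_pos hc]
        refine Relation.ReflTransGen.single (X.kof_step o n S e ?_)
        rw [mem_sKof]
        intro i
        by_cases hik : (i : ℕ) = (k : ℕ)
        · have : i = k := Fin.ext hik
          rwa [this]
        · exact hc i (by simp; omega)
      · rw [if_neg hc]
    · -- both endpoints internal
      rw [X.subVertex_mid o n e (k : ℕ) h0 hk, X.sProj_inr,
        X.subVertex_mid o n e ((k : ℕ) + 1) (by omega) (by omega), X.sProj_inr]
      have hiff : (∀ i : Fin (n e), (i : ℕ) ≤ ((⟨(k : ℕ) - 1, by omega⟩ : Fin (n e - 1)) : ℕ)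
            → X.sEd o n e i ∈ S)
          ↔ (∀ i : Fin (n e), (i : ℕ) ≤ ((⟨(k : ℕ) + 1 - 1, by omega⟩ : Fin (n e - 1)) : ℕ)
            → X.sEd o n e i ∈ S) := by
        simp only []
        constructor
        · intro hc i hi
          by_cases hik : (i : ℕ) = (k : ℕ)
          · have : i = k := Fin.ext hik
            rwa [this]
          · exact hc i (by simp at hi ⊢; omega)
        · intro hc i hi
          exact hc i (by simp at hi ⊢; omega)
      by_cases hc : ∀ i : Fin (n e), (i : ℕ) ≤ ((⟨(k : ℕ) - 1, by omega⟩ : Fin (n e - 1)) : ℕ)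
          → X.sEd o n e i ∈ S
      · rw [if_pos hc, if_pos (hiff.mp hc)]
      · rw [if_neg hc, if_neg (fun hc' => hc (hiff.mpr hc'))]

lemma proj_step (S : Finset (X.subdivide o n).Edge) {a b : (X.subdivide o n).V}
    (hab : (X.subdivide o n).tStep S a b) :
    Relation.ReflTransGen (X.tStep (X.sKof o n S))
      (X.sProj o n S a) (X.sProj o n S b) := by
  obtain ⟨⟨e, k, bb⟩, ha, hb, hS⟩ := hab
  have hSk : X.sEd o n e k ∈ S := by rwa [X.edgeOf_sub o n e k bb] at hS
  have hroot : (X.subdivide o n).root ⟨e, (k, bb)⟩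
      = X.subVertex o n e (if bb then (k : ℕ) + 1 else (k : ℕ)) := rfl
  have hroot' : (X.subdivide o n).root ((X.subdivide o n).inv ⟨e, (k, bb)⟩)
      = X.subVertex o n e (if !bb then (k : ℕ) + 1 else (k : ℕ)) := by
    cases bb <;> rfl
  cases bb
  · rw [hroot] at ha; rw [hroot'] at hb
    simp only [if_neg Bool.false_ne_true, Bool.not_false, if_pos rfl] at ha hb
    rw [← ha, ← hb]
    exact X.proj_chain_step o n S e k hSk
  · rw [hroot] at ha; rw [hroot'] at hb
    simp only [Bool.not_true, if_neg Bool.false_ne_true, if_pos rfl] at ha hb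
    rw [← ha, ← hb]
    exact (X.tConn_symm (X.sKof o n S))
      (X.proj_chain_step o n S e k hSk)

lemma proj_conn (S : Finset (X.subdivide o n).Edge) {a b : (X.subdivide o n).V}
    (h : Relation.ReflTransGen ((X.subdivide o n).tStep S) a b) :
    Relation.ReflTransGen (X.tStep (X.sKof o n S))
      (X.sProj o n S a) (X.sProj o n S b) := by
  induction h with
  | refl => exact Relation.ReflTransGen.refl
  | tail _ hbc ih => exact ih.trans (X.proj_step o n S hbc)

end Aux3

end SerreGraph
namespace SerreGraph

section Aux4

variable (X : SerreGraph) (o : X.Orientation) (n : X.Edge → ℕ)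

lemma at_most_one_missing (hne : Nonempty X.V) (S : Finset (X.subdivide o n).Edge)
    (hS : (X.subdivide o n).IsSpanningTree S) (e : X.Edge) {i i' : Fin (n e)}
    (hi : X.sEd o n e i ∉ S) (hi' : X.sEd o n e i' ∉ S) : i = i' := by
  by_contra hcon
  wlog hlt : (i : ℕ) < (i' : ℕ) generalizing i i'
  · refine this hi' hi (fun h => hcon h.symm) ?_
    have : (i : ℕ) ≠ (i' : ℕ) := fun h => hcon (Fin.ext h)
    omega
  clear hcon
  have hilt : (i : ℕ) < n e - 1 := by have := i'.2; omega
  have key : ∀ a b, ((X.subdivide o n).tStep S) a b →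
      (∃ j : Fin (n e - 1), a = Sum.inr ⟨e, j⟩ ∧ (i : ℕ) ≤ (j : ℕ) ∧ (j : ℕ) < (i' : ℕ)) →
      (∃ j : Fin (n e - 1), b = Sum.inr ⟨e, j⟩ ∧ (i : ℕ) ≤ (j : ℕ) ∧ (j : ℕ) < (i' : ℕ)) := by
    rintro a b ⟨⟨e₂, k, bb⟩, ha, hb, hSe⟩ ⟨j, rfl, hji, hji'⟩
    have hSk : X.sEd o n e₂ k ∈ S := by rwa [X.edgeOf_sub o n e₂ k bb] at hSe
    cases bb
    · -- forward chain edge: a at position k, b at position k+1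
      have ha' : X.subVertex o n e₂ (k : ℕ) = Sum.inr ⟨e, j⟩ := ha
      have hb' : X.subVertex o n e₂ ((k : ℕ) + 1) = b := hb
      have h0 : (k : ℕ) ≠ 0 := by
        intro h
        rw [h, X.subVertex_zero o n e₂] at ha'
        exact absurd ha' (by simp)
      rw [X.subVertex_mid o n e₂ (k : ℕ) h0 k.2] at ha'
      have hsig := Sum.inr_injective ha'
      injection hsig with hfst hj2
      subst e₂
      have hj3 : (k : ℕ) - 1 = (j : ℕ) := congrArg Fin.val (eq_of_heq hj2)
      have hkj : (k : ℕ) = (j : ℕ) + 1 := by omega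
      have hki' : (k : ℕ) ≠ (i' : ℕ) := by
        intro h
        exact hi' (by rwa [show k = i' from Fin.ext h] at hSk)
      have hb2 : (j : ℕ) + 1 < (i' : ℕ) := by omega
      rw [X.subVertex_mid o n e ((k : ℕ) + 1) (by omega)
        (by have := i'.2; omega)] at hb'
      refine ⟨⟨(j : ℕ) + 1, by have := i'.2; omega⟩, ?_,
        (by show (i : ℕ) ≤ (j : ℕ) + 1; omega), (by show (j : ℕ) + 1 < (i' : ℕ); omega)⟩
      rw [← hb']
      exact congrArg Sum.inr (congrArg (Sigma.mk e)
        (Fin.ext (show (k : ℕ) + 1 - 1 = (j : ℕ) + 1 by omega)))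
    · -- backward chain edge: a at position k+1, b at position k
      have ha' : X.subVertex o n e₂ ((k : ℕ) + 1) = Sum.inr ⟨e, j⟩ := ha
      have hb' : X.subVertex o n e₂ (k : ℕ) = b := hb
      have hlt1 : (k : ℕ) + 1 < n e₂ := by
        by_contra h
        have hkk : (k : ℕ) + 1 = n e₂ := by have := k.2; omega
        rw [hkk, X.subVertex_last o n e₂ (by have := k.2; omega)] at ha'
        exact absurd ha' (by simp)
      rw [X.subVertex_mid o n e₂ ((k : ℕ) + 1) (by omega) hlt1] at ha'
      have hsig := Sum.inr_injective ha'
      injection hsig with hfst hj2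
      subst e₂
      have hj3 : (k : ℕ) + 1 - 1 = (j : ℕ) := congrArg Fin.val (eq_of_heq hj2)
      have hkj : (k : ℕ) = (j : ℕ) := by omega
      have hki : (k : ℕ) ≠ (i : ℕ) := by
        intro h
        exact hi (by rwa [show k = i from Fin.ext h] at hSk)
      have hij : (i : ℕ) < (j : ℕ) := by omega
      rw [X.subVertex_mid o n e (k : ℕ) (by omega) k.2] at hb'
      refine ⟨⟨(j : ℕ) - 1, by have := i'.2; omega⟩, ?_,
        (by show (i : ℕ) ≤ (j : ℕ) - 1; omega), (by show (j : ℕ) - 1 < (i' : ℕ); omega)⟩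
      rw [← hb']
      exact congrArg Sum.inr (congrArg (Sigma.mk e)
        (Fin.ext (show (k : ℕ) - 1 = (j : ℕ) - 1 by omega)))
  have inv_all : ∀ b, Relation.ReflTransGen ((X.subdivide o n).tStep S)
      (Sum.inr ⟨e, ⟨(i : ℕ), hilt⟩⟩ : (X.subdivide o n).V) b →
      ∃ j : Fin (n e - 1), b = Sum.inr ⟨e, j⟩ ∧ (i : ℕ) ≤ (j : ℕ) ∧ (j : ℕ) < (i' : ℕ) := by
    intro b h
    induction h with
    | refl => exact ⟨_, rfl, le_rfl, hlt⟩
    | tail h1 h2 ih => exact key _ _ h2 ih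
  obtain ⟨v₀⟩ := hne
  have hcon2 := hS.1 (Sum.inr ⟨e, ⟨(i : ℕ), hilt⟩⟩) (Sum.inl v₀)
  obtain ⟨j, hj, -, -⟩ := inv_all _ hcon2
  exact absurd hj (by simp)

lemma kof_spanning (hne : Nonempty X.V) (hn : ∀ e, 0 < n e)
    (S : Finset (X.subdivide o n).Edge)
    (hS : (X.subdivide o n).IsSpanningTree S) : X.IsSpanningTree (X.sKof o n S) := by
  classical
  constructor
  · intro u v
    have h := hS.1 (Sum.inl u) (Sum.inl v)
    exact X.proj_conn o n S h
  · have h1 : S.card + 1 = Fintype.card (X.subdivide o n).V := hS.2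
    have h2 := X.card_V_sub o n
    have h3 := X.sum_pred n hn
    have h5 : S.card + Sᶜ.card = Fintype.card (X.subdivide o n).Edge :=
      Finset.card_add_card_compl S
    have h6 := X.card_E_sub o n
    have h4 : Sᶜ.card + (X.sKof o n S).card = Fintype.card X.Edge := by
      have hbij : Sᶜ.card = (X.sKof o n S)ᶜ.card := by
        apply Finset.card_bij (i := fun y _ => (X.sIdx o n y).1)
        · intro y hy
          obtain ⟨e, i, rfl⟩ := X.sEd_surj o n y
          rw [Finset.mem_compl] at hy
          rw [X.sIdx_sEd o n]
          simp only [Finset.mem_compl, mem_sKof]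
          push_neg
          exact ⟨i, hy⟩
        · intro y1 hy1 y2 hy2 heq
          obtain ⟨e1, i1, rfl⟩ := X.sEd_surj o n y1
          obtain ⟨e2, i2, rfl⟩ := X.sEd_surj o n y2
          rw [X.sIdx_sEd o n, X.sIdx_sEd o n] at heq
          simp only at heq
          subst heq
          rw [Finset.mem_compl] at hy1 hy2
          rw [X.at_most_one_missing o n hne S hS e1 hy1 hy2]
        · intro e he
          rw [Finset.mem_compl, mem_sKof] at he
          push_neg at he
          obtain ⟨i, hi⟩ := he
          exact ⟨X.sEd o n e i, Finset.mem_compl.mpr hi, rfl⟩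
      rw [hbij]
      exact Finset.card_compl_add_card _
    omega

end Aux4

end SerreGraph
namespace SerreGraph

section Aux5

lemma mem_spanningTrees (W : SerreGraph) {S : Finset W.Edge} :
    S ∈ W.spanningTrees ↔ W.IsSpanningTree S := by
  simp [spanningTrees, Set.Finite.mem_toFinset]

variable (X : SerreGraph) (o : X.Orientation) (n : X.Edge → ℕ)

/-- Remove, for each `e ∉ T`, the chain edge selected by `m`. -/
noncomputable def sRed (T : Finset X.Edge)
    (m : ∀ e : {e : X.Edge // e ∈ Tᶜ}, Fin (n e.1)) :
    Finset (X.subdivide o n).Edge :=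
  Finset.univ \ (Tᶜ.attach.image fun e => X.sEd o n e.1 (m e))

lemma mem_sRed (T : Finset X.Edge) (m : ∀ e : {e : X.Edge // e ∈ Tᶜ}, Fin (n e.1))
    (e : X.Edge) (i : Fin (n e)) :
    X.sEd o n e i ∈ X.sRed o n T m ↔ ∀ he : e ∈ Tᶜ, i ≠ m ⟨e, he⟩ := by
  classical
  simp only [sRed, Finset.mem_sdiff, Finset.mem_univ, true_and, Finset.mem_image,
    Finset.mem_attach, true_and, not_exists]
  constructor
  · intro h he hip
    exact h ⟨e, he⟩ (by rw [hip])
  · rintro h ⟨a, ha⟩ heq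
    have hsig := X.sEd_inj o n heq
    injection hsig with h1 h2
    obtain rfl : a = e := h1
    exact h ha (eq_of_heq h2).symm

lemma sKof_sRed (T : Finset X.Edge) (m : ∀ e : {e : X.Edge // e ∈ Tᶜ}, Fin (n e.1)) :
    X.sKof o n (X.sRed o n T m) = T := by
  ext e
  rw [mem_sKof]
  constructor
  · intro h
    by_contra he
    have he' : e ∈ Tᶜ := Finset.mem_compl.mpr he
    have h2 := h (m ⟨e, he'⟩)
    rw [X.mem_sRed o n] at h2
    exact h2 he' rfl
  · intro he i
    rw [X.mem_sRed o n]
    intro he'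
    exact absurd he (Finset.mem_compl.mp he')

lemma card_sRed (T : Finset X.Edge) (m : ∀ e : {e : X.Edge // e ∈ Tᶜ}, Fin (n e.1)) :
    (X.sRed o n T m).card + Tᶜ.card = ∑ e : X.Edge, n e := by
  classical
  have himg : (Tᶜ.attach.image fun e => X.sEd o n e.1 (m e)).card = Tᶜ.card := by
    rw [Finset.card_image_of_injOn ?_, Finset.card_attach]
    intro a _ b _ hab
    have hsig := X.sEd_inj o n hab
    injection hsig with h1 h2
    exact Subtype.ext h1
  have hsub : (Tᶜ.attach.image fun e => X.sEd o n e.1 (m e)) ⊆ Finset.univ :=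
    Finset.subset_univ _
  have hkey := Finset.card_sdiff_add_card Finset.univ
    (Tᶜ.attach.image fun e => X.sEd o n e.1 (m e))
  rw [Finset.union_eq_left.mpr hsub, himg, Finset.card_univ, X.card_E_sub o n] at hkey
  rw [sRed]
  exact hkey

lemma sRed_spanning (hn : ∀ e, 0 < n e) (T : Finset X.Edge) (hT : X.IsSpanningTree T)
    (m : ∀ e : {e : X.Edge // e ∈ Tᶜ}, Fin (n e.1)) :
    (X.subdivide o n).IsSpanningTree (X.sRed o n T m) := by
  classical
  have hTfull : ∀ e ∈ T, ∀ i : Fin (n e), X.sEd o n e i ∈ X.sRed o n T m := by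
    intro e he i
    rw [X.mem_sRed o n]
    intro he'
    exact absurd he (Finset.mem_compl.mp he')
  constructor
  · have claim : ∀ w : (X.subdivide o n).V, ∃ x : X.V,
        Relation.ReflTransGen ((X.subdivide o n).tStep (X.sRed o n T m)) w (Sum.inl x) := by
      intro w
      rcases w with v | ⟨e, j⟩
      · exact ⟨v, Relation.ReflTransGen.refl⟩
      · by_cases he : e ∈ T
        · exact X.conn_inr o n (X.sRed o n T m) e j (n e) (fun i _ => hTfull e he i)
        · have he' : e ∈ Tᶜ := Finset.mem_compl.mpr he
          refine X.conn_inr o n (X.sRed o n T m) e j ((m ⟨e, he'⟩ : Fin (n e)) : ℕ) ?_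
          intro i hi
          rw [X.mem_sRed o n]
          intro he''
          exact fun hh => hi (congrArg Fin.val hh)
    intro u v
    obtain ⟨x, hx⟩ := claim u
    obtain ⟨y, hy⟩ := claim v
    have hxy := X.lift_conn o n hn (X.sRed o n T m) T hTfull (hT.1 x y)
    exact (hx.trans hxy).trans ((X.subdivide o n).tConn_symm _ hy)
  · have h1 := X.card_sRed o n T m
    have h2 : Tᶜ.card + T.card = Fintype.card X.Edge := Finset.card_compl_add_card T
    have h3 := hT.2
    have h4 := X.card_V_sub o n
    have h5 := X.sum_pred n hn
    omega

/-- The missing chain-edge index over `e`, if there is one. -/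
noncomputable def sMiss (hn : ∀ e, 0 < n e) (S : Finset (X.subdivide o n).Edge)
    (e : X.Edge) : Fin (n e) := by
  classical
  exact if h : ∃ i, X.sEd o n e i ∉ S then h.choose else ⟨0, hn e⟩

lemma sMiss_spec (hn : ∀ e, 0 < n e) (S : Finset (X.subdivide o n).Edge) (e : X.Edge)
    (h : ∃ i, X.sEd o n e i ∉ S) : X.sEd o n e (X.sMiss o n hn S e) ∉ S := by
  classical
  have heq : X.sMiss o n hn S e = h.choose := by
    unfold sMiss
    exact dif_pos h
  rw [heq]
  exact h.choose_spec

lemma fiber_card (hne : Nonempty X.V) (hn : ∀ e, 0 < n e)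
    (T : Finset X.Edge) (hT : X.IsSpanningTree T) :
    ((X.subdivide o n).spanningTrees.filter fun S => X.sKof o n S = T).card
      = ∏ e ∈ Tᶜ, n e := by
  classical
  have hcard : ∏ e ∈ Tᶜ, n e
      = (Finset.univ (α := ∀ e : {e : X.Edge // e ∈ Tᶜ}, Fin (n e.1))).card := by
    rw [Finset.card_univ, Fintype.card_pi, ← Finset.prod_coe_sort Tᶜ (fun e => n e)]
    simp
  rw [hcard]
  refine Finset.card_bij' (fun S _ => fun e => X.sMiss o n hn S e.1)
    (fun m _ => X.sRed o n T m) (fun S hS => Finset.mem_univ _) ?_ ?_ ?_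
  · intro m _
    rw [Finset.mem_filter, mem_spanningTrees]
    exact ⟨X.sRed_spanning o n hn T hT m, X.sKof_sRed o n T m⟩
  · -- sRed T (sMiss S) = S
    intro S hS
    rw [Finset.mem_filter, mem_spanningTrees] at hS
    obtain ⟨hSsp, hKof⟩ := hS
    ext y
    obtain ⟨e, i, rfl⟩ := X.sEd_surj o n y
    rw [X.mem_sRed o n]
    constructor
    · intro h
      by_cases he : e ∈ T
      · rw [← hKof] at he
        exact (mem_sKof X o n).mp he i
      · have he' : e ∈ Tᶜ := Finset.mem_compl.mpr he
        have hne2 : i ≠ X.sMiss o n hn S e := h he'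
        by_contra hi
        exact hne2 (X.at_most_one_missing o n hne S hSsp e hi
          (X.sMiss_spec o n hn S e ⟨i, hi⟩))
    · intro hmem he' hieq
      have heT : e ∉ T := Finset.mem_compl.mp he'
      rw [← hKof] at heT
      have hex : ∃ i', X.sEd o n e i' ∉ S := by
        by_contra hc
        push_neg at hc
        exact heT ((mem_sKof X o n).mpr hc)
      have hsp := X.sMiss_spec o n hn S e hex
      have hieq' : i = X.sMiss o n hn S e := hieq
      rw [← hieq'] at hsp
      exact hsp hmem
  · intro m _
    funext e
    have hex : ∃ i, X.sEd o n e.1 i ∉ X.sRed o n T m := by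
      refine ⟨m e, ?_⟩
      rw [X.mem_sRed o n]
      push_neg
      exact ⟨e.2, rfl⟩
    have hspec := X.sMiss_spec o n hn (X.sRed o n T m) e.1 hex
    rw [X.mem_sRed o n] at hspec
    push_neg at hspec
    obtain ⟨he2, heq⟩ := hspec
    have hsub : (⟨(e : {e : X.Edge // e ∈ Tᶜ}).1, he2⟩ : {e : X.Edge // e ∈ Tᶜ}) = e :=
      Subtype.ext rfl
    show X.sMiss o n hn (X.sRed o n T m) e.1 = m e
    rw [heq]

end Aux5

end SerreGraph

open SerreGraph in
/-- **Lemma.** Let `X` be a finite connected graph and `n` an assignment of a positive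
integer to each edge. The number of spanning trees of the graph `X_n`, obtained by
replacing each edge `e` with a chain of `n e` edges, equals the Jacobian polynomial of `X`
evaluated at `x_e = n_e`. -/
theorem numSpanningTrees_subdivide (X : SerreGraph) (hX : X.Connected)
    (o : X.Orientation) (n : X.Edge → ℕ) (hn : ∀ e, 0 < n e) :
    ((X.subdivide o n).numSpanningTrees : ℝ) =
      MvPolynomial.eval (fun e => (n e : ℝ)) (X.jacobianPoly ℝ) := by
    classical
  have hne : Nonempty X.V := hX.1
  have key : (X.subdivide o n).numSpanningTrees
      = ∑ T ∈ X.spanningTrees, ∏ e ∈ Tᶜ, n e := by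
    rw [numSpanningTrees]
    rw [Finset.card_eq_sum_card_fiberwise (f := X.sKof o n) (t := X.spanningTrees)
      (fun S hS => (mem_spanningTrees X).mpr
        (X.kof_spanning o n hne hn S ((mem_spanningTrees _).mp hS)))]
    exact Finset.sum_congr rfl fun T hT =>
      X.fiber_card o n hne hn T ((mem_spanningTrees X).mp hT)
  rw [key, jacobianPoly, map_sum]
  push_cast
  refine Finset.sum_congr rfl fun T _ => ?_
  rw [map_prod]
  refine Finset.prod_congr rfl fun e _ => ?_
  simp
end

section
/- Let f : X̃ → X be a harmonic morphism of finite connected graphs with local degree function d_f, and let f_* : ℤ^{V(X̃)} → ℤ^{V(X)} be the pushforward map sending the basis vector of ṽ to the basis vector of f(ṽ). Then for every vertex ṽ ∈ V(X̃), (f_* ∘ L_{X̃})(ṽ) = d_f(ṽ) · (L_X ∘ f_*)(ṽ), where L_{X̃} and L_X are the Laplacians of X̃ and X. Consequently f_* maps principal divisors to principal divisors and induces a surjective homomorphism f_* : Jac(X̃) → Jac(X), whose kernel has order |Jac(X̃)|/|Jac(X)|. -/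
set_option autoImplicit false
set_option maxHeartbeats 1000000

namespace SerreGraph

section Aux

variable {Xt X : SerreGraph}

lemma aux_natCard_filter {α : Type} [Fintype α] (p : α → Prop) [DecidablePred p] :
    Nat.card {x // p x} = (Finset.univ.filter p).card := by
  simp [Nat.card_eq_fintype_card, Fintype.card_subtype]

/-- Flipping half-edges via the involution. -/
lemma aux_card_flip (X : SerreGraph) (p q : X.V → Prop) [DecidablePred p] [DecidablePred q] :
    (Finset.univ.filter (fun h => p (X.root h) ∧ q (X.root (X.inv h)))).card =
    (Finset.univ.filter (fun h => q (X.root h) ∧ p (X.root (X.inv h)))).card := by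
  apply Finset.card_bij (fun h _ => X.inv h)
  · intro h hh
    simp only [Finset.mem_filter, Finset.mem_univ, true_and, X.inv_inv] at *
    exact ⟨hh.2, hh.1⟩
  · intro h1 h1m h2 h2m hEq
    have := congrArg X.inv hEq; rwa [X.inv_inv, X.inv_inv] at this
  · intro h hh
    refine ⟨X.inv h, ?_, X.inv_inv h⟩
    simp only [Finset.mem_filter, Finset.mem_univ, true_and, X.inv_inv] at *
    exact ⟨hh.2, hh.1⟩

lemma aux_fiber_card (f : Hom Xt X) {d : Xt.V → ℕ} (hf : IsHarmonic f d) (w : Xt.V)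
    (h : X.H) (hr : X.root h = f.vMap w) :
    (Finset.univ.filter (fun h' : Xt.H => Xt.root h' = w ∧ f.hMap h' = h)).card = d w := by
  rw [hf.balanced w h hr, aux_natCard_filter]

/-- Counting half-edges at `w` whose image satisfies `p`. -/
lemma aux_count (f : Hom Xt X) {d : Xt.V → ℕ} (hf : IsHarmonic f d) (w : Xt.V)
    (p : X.H → Prop) [DecidablePred p] :
    (Finset.univ.filter (fun h' : Xt.H => Xt.root h' = w ∧ p (f.hMap h'))).card =
    d w * (Finset.univ.filter (fun h : X.H => X.root h = f.vMap w ∧ p h)).card := by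
  classical
  rw [Finset.card_eq_sum_card_fiberwise
    (f := f.hMap) (t := Finset.univ.filter (fun h : X.H => X.root h = f.vMap w ∧ p h))
    (by
      intro x hx
      simp only [Finset.mem_coe, Finset.mem_filter, Finset.mem_univ, true_and] at *
      exact ⟨by rw [f.root_hMap, hx.1], hx.2⟩)]
  have heq : ∀ h ∈ Finset.univ.filter (fun h : X.H => X.root h = f.vMap w ∧ p h),
      ((Finset.univ.filter (fun h' : Xt.H => Xt.root h' = w ∧ p (f.hMap h'))).filter
        (fun h' => f.hMap h' = h)).card = d w := by
    intro h hh
    simp only [Finset.mem_filter, Finset.mem_univ, true_and] at hh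
    rw [Finset.filter_filter]
    rw [← aux_fiber_card f hf w h hh.1]
    congr 1
    apply Finset.filter_congr
    intro x _
    constructor
    · rintro ⟨⟨h1, _⟩, h3⟩; exact ⟨h1, h3⟩
    · rintro ⟨h1, h3⟩; exact ⟨⟨h1, h3 ▸ hh.2⟩, h3⟩
  rw [Finset.sum_congr rfl heq, Finset.sum_const, smul_eq_mul, mul_comm]

lemma aux_valency (f : Hom Xt X) {d : Xt.V → ℕ} (hf : IsHarmonic f d) (w : Xt.V) :
    Xt.valency w = d w * X.valency (f.vMap w) := by
  classical
  have h1 : Xt.valency w =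
      (Finset.univ.filter (fun h' : Xt.H => Xt.root h' = w ∧ (fun _ : X.H => True) (f.hMap h'))).card := by
    rw [valency, aux_natCard_filter]
    congr 1
    simp
  have h2 : X.valency (f.vMap w) =
      (Finset.univ.filter (fun h : X.H => X.root h = f.vMap w ∧ True)).card := by
    rw [valency, aux_natCard_filter]
    congr 1
    simp
  rw [h1, h2, aux_count f hf w (fun _ => True)]

/-- The key count: half-edges at `w` with image's opposite root at `v`. -/
lemma aux_adj_count (f : Hom Xt X) {d : Xt.V → ℕ} (hf : IsHarmonic f d) (w : Xt.V)
    (v : X.V) :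
    (Finset.univ.filter (fun h' : Xt.H =>
        Xt.root h' = w ∧ f.vMap (Xt.root (Xt.inv h')) = v)).card =
    d w * (Finset.univ.filter (fun h : X.H =>
        X.root h = f.vMap w ∧ X.root (X.inv h) = v)).card := by
  classical
  rw [← aux_count f hf w (fun h => X.root (X.inv h) = v)]
  congr 1
  apply Finset.filter_congr
  intro x _
  have : X.root (X.inv (f.hMap x)) = f.vMap (Xt.root (Xt.inv x)) := by
    rw [← f.hMap_inv, f.root_hMap]
  rw [this]

/-- The Laplacian identity on columns. -/
lemma aux_lapl_key (f : Hom Xt X) {d : Xt.V → ℕ} (hf : IsHarmonic f d)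
    (v : X.V) (w : Xt.V) :
    ∑ u ∈ Finset.univ.filter (fun u => f.vMap u = v), Xt.lapl u w
      = (d w : ℤ) * X.lapl v (f.vMap w) := by
  classical
  simp only [lapl, Matrix.of_apply]
  rw [Finset.sum_sub_distrib]
  have e1 : ∑ u ∈ Finset.univ.filter (fun u => f.vMap u = v),
      (if u = w then (Xt.valency u : ℤ) else 0)
      = if f.vMap w = v then (Xt.valency w : ℤ) else 0 := by
    rw [Finset.sum_ite_eq' (Finset.univ.filter (fun u => f.vMap u = v)) w
      (fun u => (Xt.valency u : ℤ))]
    simp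
  have e2 : ∑ u ∈ Finset.univ.filter (fun u => f.vMap u = v),
      ((Nat.card {h : Xt.H // Xt.root h = u ∧ Xt.root (Xt.inv h) = w} : ℤ))
      = ((Finset.univ.filter (fun h : Xt.H =>
          f.vMap (Xt.root h) = v ∧ Xt.root (Xt.inv h) = w)).card : ℤ) := by
    rw [Finset.card_eq_sum_card_fiberwise (f := Xt.root)
      (t := Finset.univ.filter (fun u => f.vMap u = v))
      (by
        intro x hx
        simp only [Finset.mem_coe, Finset.mem_filter, Finset.mem_univ, true_and] at *
        exact hx.1)]
    push_cast
    apply Finset.sum_congr rfl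
    intro u hu
    simp only [Finset.mem_filter, Finset.mem_univ, true_and] at hu
    rw [aux_natCard_filter, Finset.filter_filter]
    norm_cast
    congr 1
    apply Finset.filter_congr
    intro x _
    constructor
    · rintro ⟨h3, h2⟩; exact ⟨⟨h3 ▸ hu, h2⟩, h3⟩
    · rintro ⟨⟨_, h2⟩, h3⟩; exact ⟨h3, h2⟩
  rw [e1, e2]
  have e3 : (Finset.univ.filter (fun h : Xt.H =>
      f.vMap (Xt.root h) = v ∧ Xt.root (Xt.inv h) = w)).card
      = d w * (Finset.univ.filter (fun h : X.H =>
          X.root h = f.vMap w ∧ X.root (X.inv h) = v)).card := by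
    rw [aux_card_flip Xt (fun u => f.vMap u = v) (fun u => u = w),
      ← aux_adj_count f hf w v]
  have e4 : (Nat.card {h : X.H // X.root h = v ∧ X.root (X.inv h) = f.vMap w} : ℤ)
      = ((Finset.univ.filter (fun h : X.H =>
          X.root h = f.vMap w ∧ X.root (X.inv h) = v)).card : ℤ) := by
    rw [aux_natCard_filter]
    norm_cast
    exact aux_card_flip X (fun u => u = v) (fun u => u = f.vMap w)
  rw [e3, e4, mul_sub]
  by_cases hv : v = f.vMap w
  · subst hv
    rw [if_pos rfl, if_pos rfl, aux_valency f hf w]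
    push_cast; ring
  · rw [if_neg (fun hcon => hv hcon.symm), if_neg hv]
    push_cast; ring

/-- The Laplacian identity for general divisors. -/
lemma aux_push_lapl (f : Hom Xt X) {d : Xt.V → ℕ} (hf : IsHarmonic f d)
    (D₀ : Xt.V → ℤ) :
    pushforward f (Xt.laplHom D₀) =
    X.laplHom (pushforward f (fun w => (d w : ℤ) * D₀ w)) := by
  classical
  funext v
  simp only [pushforward, laplHom, AddMonoidHom.coe_mk, ZeroHom.coe_mk]
  calc ∑ u ∈ Finset.univ.filter (fun u => f.vMap u = v), ∑ w, Xt.lapl u w * D₀ w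
      = ∑ w, (∑ u ∈ Finset.univ.filter (fun u => f.vMap u = v), Xt.lapl u w) * D₀ w := by
        rw [Finset.sum_comm]
        simp [Finset.sum_mul]
    _ = ∑ w, ((d w : ℤ) * X.lapl v (f.vMap w)) * D₀ w := by
        apply Finset.sum_congr rfl
        intro w _
        rw [aux_lapl_key f hf v w]
    _ = ∑ v', ∑ w ∈ Finset.univ.filter (fun w => f.vMap w = v'),
          ((d w : ℤ) * X.lapl v (f.vMap w)) * D₀ w := by
        rw [Finset.sum_fiberwise_of_maps_to (fun w _ => Finset.mem_univ (f.vMap w))]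
    _ = ∑ v', X.lapl v v' * ∑ w ∈ Finset.univ.filter (fun w => f.vMap w = v'),
          (d w : ℤ) * D₀ w := by
        apply Finset.sum_congr rfl
        intro v' _
        rw [Finset.mul_sum]
        apply Finset.sum_congr rfl
        intro w hw
        simp only [Finset.mem_filter, Finset.mem_univ, true_and] at hw
        rw [hw]; ring

lemma aux_push_deg (f : Hom Xt X) (D : Xt.V → ℤ) :
    ∑ v, pushforward f D v = ∑ w, D w := by
  classical
  simp only [pushforward]
  exact Finset.sum_fiberwise_of_maps_to (fun w _ => Finset.mem_univ (f.vMap w)) D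

lemma aux_vMap_surj (f : Hom Xt X) {d : Xt.V → ℕ} (hf : IsHarmonic f d)
    (hXt : Xt.Connected) (hX : X.Connected) :
    Function.Surjective f.vMap := by
  obtain ⟨w₀⟩ := hXt.1
  intro v
  have hrel := hX.2 (f.vMap w₀) v
  induction hrel with
  | refl => exact ⟨w₀, rfl⟩
  | tail _ step ih =>
    obtain ⟨w', hw'⟩ := ih
    obtain ⟨h, hru, hrv, _⟩ := step
    have hpos : 0 < Nat.card {h' : Xt.H // Xt.root h' = w' ∧ f.hMap h' = h} := by
      rw [← hf.balanced w' h (by rw [hru, hw'])]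
      exact hf.pos w'
    have : Nonempty {h' : Xt.H // Xt.root h' = w' ∧ f.hMap h' = h} := by
      exact (Nat.card_ne_zero.mp hpos.ne').1
    obtain ⟨⟨h', hh1, hh2⟩⟩ := this
    refine ⟨Xt.root (Xt.inv h'), ?_⟩
    rw [← f.root_hMap, f.hMap_inv, hh2, hrv]

end Aux

end SerreGraph

open SerreGraph in
/-- **Proposition.** Let `f : X̃ → X` be a harmonic morphism of finite connected graphs
with local degree `d`. Then `(f_* ∘ L_X̃)(ṽ) = d(ṽ) · (L_X ∘ f_*)(ṽ)` on basis divisors;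
consequently `f_*` maps principal divisors to principal divisors and induces a surjective
homomorphism `f_* : Jac(X̃) → Jac(X)` whose kernel has order `|Jac(X̃)| / |Jac(X)|`. -/
theorem pushforward_laplacian_and_jacobian
    (Xt X : SerreGraph) (hXt : Xt.Connected) (hX : X.Connected)
    (f : Hom Xt X) (d : Xt.V → ℕ) (hf : IsHarmonic f d) :
    (∀ w : Xt.V,
      pushforward f (Xt.laplHom (Pi.single w 1)) =
        (d w : ℤ) • X.laplHom (pushforward f (Pi.single w 1))) ∧
    (∀ D : Xt.V → ℤ, D ∈ Xt.principal → pushforward f D ∈ X.principal) ∧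
    ∃ φ : Xt.jac →+ X.jac,
      Function.Surjective φ ∧
      (∀ (D : Xt.div0) (D' : X.div0), (D' : X.V → ℤ) = pushforward f (D : Xt.V → ℤ) →
        φ (QuotientAddGroup.mk D) = QuotientAddGroup.mk D') ∧
      Nat.card φ.ker * Nat.card X.jac = Nat.card Xt.jac := by
  classical
  have hsmul_push : ∀ (c : ℤ) (D : Xt.V → ℤ),
      pushforward f (c • D) = c • pushforward f D := by
    intro c D; funext v
    simp [pushforward, Finset.mul_sum]
  have part1 : ∀ w : Xt.V,
      pushforward f (Xt.laplHom (Pi.single w 1)) =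
        (d w : ℤ) • X.laplHom (pushforward f (Pi.single w 1)) := by
    intro w
    have hfun : (fun w' => (d w' : ℤ) * Pi.single (M := fun _ => ℤ) w 1 w') =
        (d w : ℤ) • (Pi.single (M := fun _ => ℤ) w 1) := by
      funext w'
      by_cases hw : w' = w
      · subst hw; simp
      · simp [Pi.single_apply, hw]
    rw [aux_push_lapl f hf, hfun, hsmul_push, AddMonoidHom.map_zsmul]
  have part2 : ∀ D : Xt.V → ℤ, D ∈ Xt.principal → pushforward f D ∈ X.principal := by
    intro D hD
    obtain ⟨D₀, rfl⟩ := hD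
    exact ⟨pushforward f (fun w => (d w : ℤ) * D₀ w), (aux_push_lapl f hf D₀).symm⟩
  refine ⟨part1, part2, ?_⟩
  have hsurjV := aux_vMap_surj f hf hXt hX
  have hmem : ∀ (D : Xt.V → ℤ), (∑ w, D w = 0) → pushforward f D ∈ X.div0 := by
    intro D hD
    show ∑ v, pushforward f D v = 0
    rw [aux_push_deg f D]; exact hD
  let push0 : Xt.div0 →+ X.div0 :=
    { toFun := fun D => ⟨pushforward f D.1, hmem D.1 D.2⟩
      map_zero' := by
        apply Subtype.ext
        funext v
        simp [pushforward]
      map_add' := by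
        intro a b
        apply Subtype.ext
        funext v
        simp [pushforward, Finset.sum_add_distrib] }
  let ψ : Xt.div0 →+ X.jac :=
    (QuotientAddGroup.mk' (X.principal.addSubgroupOf X.div0)).comp push0
  have hker : ∀ D ∈ Xt.principal.addSubgroupOf Xt.div0, ψ D = 0 := by
    intro D hD
    have hD1 : (D : Xt.V → ℤ) ∈ Xt.principal := hD
    have : (push0 D : X.V → ℤ) ∈ X.principal := part2 _ hD1
    show QuotientAddGroup.mk' (X.principal.addSubgroupOf X.div0) (push0 D) = 0
    exact (QuotientAddGroup.eq_zero_iff _).mpr this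
  refine ⟨QuotientAddGroup.lift (Xt.principal.addSubgroupOf Xt.div0) ψ hker, ?_, ?_, ?_⟩
  · -- surjectivity
    intro y
    induction y using QuotientAddGroup.induction_on with
    | H D' =>
      set s : X.V → Xt.V := fun v => (hsurjV v).choose with hs_def
      have hs : ∀ v, f.vMap (s v) = v := fun v => (hsurjV v).choose_spec
      set E : Xt.V → ℤ := fun w => ∑ v, if w = s v then D'.1 v else 0 with hE_def
      have hEdeg : ∑ w, E w = 0 := by
        rw [hE_def]
        rw [Finset.sum_comm]
        have : ∀ v : X.V, (∑ w, if w = s v then D'.1 v else 0) = D'.1 v := by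
          intro v; simp
        rw [Finset.sum_congr rfl (fun v _ => this v)]
        exact D'.2
      have hEpush : pushforward f E = D'.1 := by
        funext v₀
        show ∑ w ∈ Finset.univ.filter (fun w => f.vMap w = v₀), E w = D'.1 v₀
        rw [hE_def]
        rw [Finset.sum_comm]
        have : ∀ v : X.V,
            (∑ w ∈ Finset.univ.filter (fun w => f.vMap w = v₀),
              if w = s v then D'.1 v else 0) = if v = v₀ then D'.1 v else 0 := by
          intro v
          rw [Finset.sum_ite_eq']
          simp only [Finset.mem_filter, Finset.mem_univ, true_and, hs v]
        rw [Finset.sum_congr rfl (fun v _ => this v)]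
        simp
      refine ⟨QuotientAddGroup.mk ⟨E, hEdeg⟩, ?_⟩
      show ψ ⟨E, hEdeg⟩ = QuotientAddGroup.mk D'
      show QuotientAddGroup.mk' (X.principal.addSubgroupOf X.div0) (push0 ⟨E, hEdeg⟩)
        = QuotientAddGroup.mk D'
      have hpe : push0 ⟨E, hEdeg⟩ = D' := Subtype.ext hEpush
      rw [hpe]
      rfl
  · -- compatibility
    intro D D' hDD'
    show ψ D = QuotientAddGroup.mk D'
    show QuotientAddGroup.mk' (X.principal.addSubgroupOf X.div0) (push0 D)
      = QuotientAddGroup.mk D'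
    have hpe : push0 D = D' := Subtype.ext hDD'.symm
    rw [hpe]
    rfl
  · -- kernel cardinality
    set φ := QuotientAddGroup.lift (Xt.principal.addSubgroupOf Xt.div0) ψ hker with hφ
    have hsurjφ : Function.Surjective φ := by
      intro y
      induction y using QuotientAddGroup.induction_on with
      | H D' =>
        set s : X.V → Xt.V := fun v => (hsurjV v).choose with hs_def
        have hs : ∀ v, f.vMap (s v) = v := fun v => (hsurjV v).choose_spec
        set E : Xt.V → ℤ := fun w => ∑ v, if w = s v then D'.1 v else 0 with hE_def
        have hEdeg : ∑ w, E w = 0 := by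
          rw [hE_def]
          rw [Finset.sum_comm]
          have : ∀ v : X.V, (∑ w, if w = s v then D'.1 v else 0) = D'.1 v := by
            intro v; simp
          rw [Finset.sum_congr rfl (fun v _ => this v)]
          exact D'.2
        have hEpush : pushforward f E = D'.1 := by
          funext v₀
          show ∑ w ∈ Finset.univ.filter (fun w => f.vMap w = v₀), E w = D'.1 v₀
          rw [hE_def]
          rw [Finset.sum_comm]
          have : ∀ v : X.V,
              (∑ w ∈ Finset.univ.filter (fun w => f.vMap w = v₀),
                if w = s v then D'.1 v else 0) = if v = v₀ then D'.1 v else 0 := by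
            intro v
            rw [Finset.sum_ite_eq']
            simp only [Finset.mem_filter, Finset.mem_univ, true_and, hs v]
          rw [Finset.sum_congr rfl (fun v _ => this v)]
          simp
        refine ⟨QuotientAddGroup.mk ⟨E, hEdeg⟩, ?_⟩
        show ψ ⟨E, hEdeg⟩ = QuotientAddGroup.mk D'
        show QuotientAddGroup.mk' (X.principal.addSubgroupOf X.div0) (push0 ⟨E, hEdeg⟩)
          = QuotientAddGroup.mk D'
        have hpe : push0 ⟨E, hEdeg⟩ = D' := Subtype.ext hEpush
        rw [hpe]
        rfl
    have hiso := QuotientAddGroup.quotientKerEquivOfSurjective φ hsurjφ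
    have h1 : Nat.card X.jac = Nat.card (Xt.jac ⧸ φ.ker) :=
      (Nat.card_congr hiso.toEquiv).symm
    have h2 : Nat.card Xt.jac = Nat.card (Xt.jac ⧸ φ.ker) * Nat.card φ.ker :=
      AddSubgroup.card_eq_card_quotient_mul_card_addSubgroup φ.ker
    rw [h1, h2, mul_comm]
    rfl
end

section
/- Let f : X̃ → X be a harmonic morphism of finite connected graphs and let F ⊆ E(X). Then the contraction f_F : X̃_{f⁻¹(F)} → X_F, defined by contracting the edges F in X and the edges f⁻¹(F) in X̃ and taking the induced map, is a harmonic morphism, provided the local degree at each contracted vertex ṽ_{ij} of X̃_{f⁻¹(F)} (corresponding to a connected component X̃_{ij} of f⁻¹(Xᵢ), where Xᵢ is a connected component of the subgraph of X induced by F) is set equal to the global degree of the restriction of f to X̃_{ij} over Xᵢ, and the local degrees at all other vertices are unchanged. -/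
set_option autoImplicit false
set_option maxHeartbeats 1000000

namespace SerreGraph

lemma Hom.edgeMap_edgeOf {Xt X : SerreGraph} (f : Hom Xt X) (h : Xt.H) :
    f.edgeMap (Xt.edgeOf h) = X.edgeOf (f.hMap h) := rfl

lemma ContractionData.hMap_congr {X Xc : SerreGraph} {F : Finset X.Edge}
    (cd : ContractionData X Xc F) {h₁ h₂ : X.H} (e : h₁ = h₂)
    (hh₁ : X.edgeOf h₁ ∉ F) (hh₂ : X.edgeOf h₂ ∉ F) :
    cd.hMap h₁ hh₁ = cd.hMap h₂ hh₂ := by subst e; rfl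

section HarmAux

variable {Xt X : SerreGraph} (f : Hom Xt X) (d : Xt.V → ℕ)
  (F : Finset X.Edge) (Ft : Finset Xt.Edge)

open Classical

/-- pushdown of the contraction relation -/
lemma push_rel (hFt : ∀ e : Xt.Edge, e ∈ Ft ↔ f.edgeMap e ∈ F) {u w : Xt.V}
    (hr : Relation.ReflTransGen (Xt.contractStep Ft) u w) :
    Relation.ReflTransGen (X.contractStep F) (f.vMap u) (f.vMap w) := by
  induction hr with
  | refl => exact Relation.ReflTransGen.refl
  | tail _hab hstep ih =>
    obtain ⟨ht, htF, ha, hb⟩ := hstep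
    refine ih.tail ⟨f.hMap ht, ?_, ?_, ?_⟩
    · exact (hFt (Xt.edgeOf ht)).mp htF
    · rw [f.root_hMap, ha]
    · rw [← f.hMap_inv, f.root_hMap, hb]

lemma rel_symm {u w : Xt.V}
    (hr : Relation.ReflTransGen (Xt.contractStep Ft) u w) :
    Relation.ReflTransGen (Xt.contractStep Ft) w u := by
  induction hr with
  | refl => exact Relation.ReflTransGen.refl
  | tail _hab hstep ih =>
    obtain ⟨h, hF, ha, hb⟩ := hstep
    exact Relation.ReflTransGen.head
      ⟨Xt.inv h, by rwa [Xt.edgeOf_inv], hb, by rwa [Xt.inv_inv]⟩ ih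

/-- counting half-edges over `h₀` rooted in the component of `w` -/
lemma count_aux (hf : IsHarmonic f d) (h₀ : X.H) (w : Xt.V) :
    (Finset.univ.filter (fun h : Xt.H => f.hMap h = h₀ ∧
        Relation.ReflTransGen (Xt.contractStep Ft) (Xt.root h) w)).card =
    ∑ u ∈ Finset.univ.filter (fun u : Xt.V => f.vMap u = X.root h₀ ∧
        Relation.ReflTransGen (Xt.contractStep Ft) u w), d u := by
  rw [Finset.card_eq_sum_card_fiberwise (f := Xt.root)
    (t := Finset.univ.filter (fun u : Xt.V => f.vMap u = X.root h₀ ∧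
        Relation.ReflTransGen (Xt.contractStep Ft) u w))]
  · refine Finset.sum_congr rfl (fun u hu => ?_)
    simp only [Finset.mem_filter, Finset.mem_univ, true_and] at hu
    have hbal := hf.balanced u h₀ hu.1.symm
    have : (Finset.univ.filter (fun h : Xt.H => f.hMap h = h₀ ∧
        Relation.ReflTransGen (Xt.contractStep Ft) (Xt.root h) w)).filter
        (fun h => Xt.root h = u)
        = Finset.univ.filter (fun h : Xt.H => Xt.root h = u ∧ f.hMap h = h₀) := by
      ext h
      simp only [Finset.mem_filter, Finset.mem_univ, true_and]
      constructor
      · rintro ⟨⟨h1, _⟩, h3⟩; exact ⟨h3, h1⟩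
      · rintro ⟨h1, h2⟩; exact ⟨⟨h2, h1 ▸ hu.2⟩, h1⟩
    rw [this, hbal, Nat.card_eq_fintype_card, Fintype.card_subtype]
  · intro h hh
    simp only [Finset.mem_coe, Finset.mem_filter, Finset.mem_univ, true_and] at hh ⊢
    refine ⟨?_, hh.2⟩
    rw [← f.root_hMap, hh.1]

/-- the fiber-sum is invariant along one contraction step downstairs -/
lemma step_aux (hf : IsHarmonic f d)
    (hFt : ∀ e : Xt.Edge, e ∈ Ft ↔ f.edgeMap e ∈ F) (w : Xt.V) {v v' : X.V}
    (hstep : X.contractStep F v v') :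
    ∑ u ∈ Finset.univ.filter (fun u : Xt.V => f.vMap u = v ∧
        Relation.ReflTransGen (Xt.contractStep Ft) u w), d u =
    ∑ u ∈ Finset.univ.filter (fun u : Xt.V => f.vMap u = v' ∧
        Relation.ReflTransGen (Xt.contractStep Ft) u w), d u := by
  obtain ⟨h₀, hFmem, hv, hv'⟩ := hstep
  subst hv
  have hv'' : X.root (X.inv h₀) = v' := hv'
  subst hv''
  rw [← count_aux f d Ft hf h₀ w, ← count_aux f d Ft hf (X.inv h₀) w]
  refine Finset.card_bij' (fun h _ => Xt.inv h) (fun h _ => Xt.inv h) ?_ ?_ ?_ ?_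
  · intro h hh
    simp only [Finset.mem_filter, Finset.mem_univ, true_and] at hh ⊢
    refine ⟨by rw [f.hMap_inv, hh.1], ?_⟩
    have hFtmem : Xt.edgeOf h ∈ Ft := by
      rw [hFt, f.edgeMap_edgeOf, hh.1]
      exact hFmem
    refine Relation.ReflTransGen.head ⟨Xt.inv h, ?_, rfl, ?_⟩ hh.2
    · rwa [Xt.edgeOf_inv]
    · rw [Xt.inv_inv]
  · intro h hh
    simp only [Finset.mem_filter, Finset.mem_univ, true_and] at hh ⊢
    have h1 : f.hMap (Xt.inv h) = h₀ := by
      rw [f.hMap_inv, hh.1, X.inv_inv]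
    refine ⟨h1, ?_⟩
    have hFtmem : Xt.edgeOf h ∈ Ft := by
      rw [hFt, f.edgeMap_edgeOf, hh.1, X.edgeOf_inv]
      exact hFmem
    refine Relation.ReflTransGen.head ⟨Xt.inv h, ?_, rfl, ?_⟩ hh.2
    · rwa [Xt.edgeOf_inv]
    · rw [Xt.inv_inv]
  · intro h _; exact Xt.inv_inv h
  · intro h _; exact Xt.inv_inv h

/-- the fiber-sum is invariant along the contraction relation downstairs -/
lemma const_aux (hf : IsHarmonic f d)
    (hFt : ∀ e : Xt.Edge, e ∈ Ft ↔ f.edgeMap e ∈ F) (w : Xt.V) {v v' : X.V}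
    (hrel : Relation.ReflTransGen (X.contractStep F) v v') :
    ∑ u ∈ Finset.univ.filter (fun u : Xt.V => f.vMap u = v ∧
        Relation.ReflTransGen (Xt.contractStep Ft) u w), d u =
    ∑ u ∈ Finset.univ.filter (fun u : Xt.V => f.vMap u = v' ∧
        Relation.ReflTransGen (Xt.contractStep Ft) u w), d u := by
  induction hrel with
  | refl => rfl
  | tail _hab hstep ih => exact ih.trans (step_aux f d F Ft hf hFt w hstep)

end HarmAux

end SerreGraph


open SerreGraph in
/-- **Lemma.** Let `f : X̃ → X` be a harmonic morphism of finite connected graphs and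
`F ⊆ E(X)`. The contraction `f_F : X̃_{f⁻¹(F)} → X_F` (exhibited by contraction data `cdt`,
`cd` and the induced morphism `g`) is harmonic, with local degree at each contracted vertex
equal to the global degree of the restriction of `f` to the corresponding connected
component (and unchanged local degrees elsewhere). -/
theorem contraction_of_harmonic_is_harmonic
    (Xt X Xtc Xc : SerreGraph) (hXt : Xt.Connected) (hX : X.Connected)
    (f : Hom Xt X) (d : Xt.V → ℕ) (hf : IsHarmonic f d)
    (F : Finset X.Edge) (Ft : Finset Xt.Edge)
    (hFt : ∀ e : Xt.Edge, e ∈ Ft ↔ f.edgeMap e ∈ F)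
    (cd : ContractionData X Xc F) (cdt : ContractionData Xt Xtc Ft)
    (g : Hom Xtc Xc)
    (hgv : ∀ w : Xt.V, g.vMap (cdt.vMap w) = cd.vMap (f.vMap w))
    (hgh : ∀ (h : Xt.H) (hh : Xt.edgeOf h ∉ Ft) (hh' : X.edgeOf (f.hMap h) ∉ F),
      g.hMap (cdt.hMap h hh) = cd.hMap (f.hMap h) hh') :
    ∃ dc : Xtc.V → ℕ,
      (∀ w : Xt.V, dc (cdt.vMap w) =
        ∑ u ∈ (Set.toFinite {u : Xt.V | f.vMap u = f.vMap w ∧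
            Relation.ReflTransGen (Xt.contractStep Ft) u w}).toFinset, d u) ∧
      IsHarmonic g dc := by
  classical
  have main : ∀ w : Xt.V,
      (∑ u ∈ Finset.univ.filter (fun u : Xt.V =>
        f.vMap u = f.vMap (cdt.vMap_surjective (cdt.vMap w)).choose ∧
        Relation.ReflTransGen (Xt.contractStep Ft) u
          (cdt.vMap_surjective (cdt.vMap w)).choose), d u)
      = ∑ u ∈ Finset.univ.filter (fun u : Xt.V => f.vMap u = f.vMap w ∧
        Relation.ReflTransGen (Xt.contractStep Ft) u w), d u := by
    intro w
    have hw₀ : cdt.vMap (cdt.vMap_surjective (cdt.vMap w)).choose = cdt.vMap w :=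
      (cdt.vMap_surjective (cdt.vMap w)).choose_spec
    set w₀ := (cdt.vMap_surjective (cdt.vMap w)).choose with hw₀def
    have hrw : Relation.ReflTransGen (Xt.contractStep Ft) w₀ w :=
      (cdt.vMap_eq_iff w₀ w).mp hw₀
    have hfilter : Finset.univ.filter (fun u : Xt.V => f.vMap u = f.vMap w₀ ∧
          Relation.ReflTransGen (Xt.contractStep Ft) u w₀)
        = Finset.univ.filter (fun u : Xt.V => f.vMap u = f.vMap w₀ ∧
          Relation.ReflTransGen (Xt.contractStep Ft) u w) := by
      ext u
      simp only [Finset.mem_filter, Finset.mem_univ, true_and]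
      constructor
      · rintro ⟨h1, h2⟩; exact ⟨h1, h2.trans hrw⟩
      · rintro ⟨h1, h2⟩; exact ⟨h1, h2.trans (rel_symm Ft hrw)⟩
    rw [hfilter]
    exact const_aux f d F Ft hf hFt w (push_rel f F Ft hFt hrw)
  refine ⟨fun v' => ∑ u ∈ Finset.univ.filter (fun u : Xt.V =>
      f.vMap u = f.vMap (cdt.vMap_surjective v').choose ∧
      Relation.ReflTransGen (Xt.contractStep Ft) u (cdt.vMap_surjective v').choose),
      d u, ?_, ?_, ?_⟩
  · intro w
    refine (main w).trans (Finset.sum_congr ?_ (fun _ _ => rfl))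
    ext u
    simp only [Finset.mem_filter, Finset.mem_univ, true_and, Set.Finite.mem_toFinset,
      Set.mem_setOf_eq]
  · -- positivity
    intro v'
    have hmem : (cdt.vMap_surjective v').choose ∈ Finset.univ.filter (fun u : Xt.V =>
        f.vMap u = f.vMap (cdt.vMap_surjective v').choose ∧
        Relation.ReflTransGen (Xt.contractStep Ft) u (cdt.vMap_surjective v').choose) :=
      Finset.mem_filter.mpr ⟨Finset.mem_univ _, rfl, Relation.ReflTransGen.refl⟩
    exact lt_of_lt_of_le (hf.pos _)
      (Finset.single_le_sum (fun _ _ => Nat.zero_le _) hmem)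
  · -- balanced
    intro v' k hrootk
    obtain ⟨w, rfl⟩ := cdt.vMap_surjective v'
    obtain ⟨h₀, hh₀, rfl⟩ := cd.hMap_surjective k
    have hpath : Relation.ReflTransGen (X.contractStep F) (X.root h₀) (f.vMap w) := by
      refine (cd.vMap_eq_iff _ _).mp ?_
      rw [← cd.root_hMap h₀ hh₀, hrootk, hgv]
    have key : ∀ h : Xt.H, f.hMap h = h₀ → Xt.edgeOf h ∉ Ft := by
      intro h he hcon
      rw [hFt, f.edgeMap_edgeOf, he] at hcon
      exact hh₀ hcon
    refine (main w).trans ?_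
    rw [← const_aux f d F Ft hf hFt w hpath, ← count_aux f d Ft hf h₀ w,
      Nat.card_eq_fintype_card, Fintype.card_subtype]
    refine Finset.card_bij
      (fun h hh => cdt.hMap h (key h (Finset.mem_filter.mp hh).2.1)) ?_ ?_ ?_
    · intro a ha
      obtain ⟨-, ha1, ha2⟩ := Finset.mem_filter.mp ha
      simp only [Finset.mem_filter, Finset.mem_univ, true_and]
      constructor
      · rw [cdt.root_hMap]
        exact (cdt.vMap_eq_iff _ _).mpr ha2
      · have hh' : X.edgeOf (f.hMap a) ∉ F := by rw [ha1]; exact hh₀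
        rw [hgh a _ hh']
        exact cd.hMap_congr ha1 hh' hh₀
    · intro a₁ ha₁ a₂ ha₂ heq
      exact cdt.hMap_injective _ _ _ _ heq
    · intro b hb
      obtain ⟨-, hb1, hb2⟩ := Finset.mem_filter.mp hb
      obtain ⟨h, hh, rfl⟩ := cdt.hMap_surjective b
      have hh' : X.edgeOf (f.hMap h) ∉ F := by
        rw [← f.edgeMap_edgeOf]
        exact fun hcon => hh ((hFt _).mpr hcon)
      have hfh : f.hMap h = h₀ := by
        rw [hgh h hh hh'] at hb2
        exact cd.hMap_injective _ _ _ _ hb2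
      have hrel : Relation.ReflTransGen (Xt.contractStep Ft) (Xt.root h) w := by
        refine (cdt.vMap_eq_iff _ _).mp ?_
        rw [← cdt.root_hMap h hh]
        exact hb1
      have hmem : h ∈ Finset.univ.filter (fun h : Xt.H => f.hMap h = h₀ ∧
          Relation.ReflTransGen (Xt.contractStep Ft) (Xt.root h) w) := by
        simp only [Finset.mem_filter, Finset.mem_univ, true_and]
        exact ⟨hfh, hrel⟩
      exact ⟨h, hmem, rfl⟩
end
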